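/- arXiv:1807.11208 — 11 statements merged into one kernel-verified Lean document; each statement's English description precedes it below -/
import Mathlib

section
/- For every m ≥ 1 the polynomials P(m,x) satisfy: (i) deg_x P(m,x) ≤ 2(m−1); (ii) P(m,x) = P(m,−x) as polynomials; (iii) for all positive integers m, n one has P(m,n) = P(n,m) + (−1)^{m+n−1}·(m−n), i.e. the function f(m,n) = P(m,n) + (−1)^{m+n}·m is symmetric on ℕ×ℕ. -/
/-!
In terms of generalized binomial coefficients, the summand of `P(m, x)` indexed by
`ν = m - 1 - i`, `μ = j` is `C(y-1-j, i) C(y-1-i, j) C(y-2-i-j, m-1-i) C(y-2-i-j, m-1-j)` with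
`y = x + m`. At `x = n` this is a term `b_m(i, j)` of a double sum over `i, j < s = m + n`.
Terms with `i + j ≥ s` vanish, and for `i + j ≤ s - 2` the symmetry `C(E, k) = C(E, E - k)` with
`E = s - 2 - i - j` gives `b_m(i, j) = b_n(j, i)`. Hence `P(m, n) - P(n, m)` comes from the
antidiagonal `i + j = s - 1` alone, where the upper index is `-1` and `b_m(i, j) = (-1)^(s-1)`
exactly when `n ≤ i < m`.

The degree bound and the evenness are read off the product form of `t`: it has `μ + ν` linear
factors, and `x ↦ -x` maps `t(ν, μ)` to `±t(μ, ν)`.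
-/

/-- The polynomial `t(ν,μ,m;x) = ∏_{k=1}^{μ}(x+ν−μ+k) · ∏_{l=1}^{ν}(x−1−μ+l)` (independent of `m`). -/
noncomputable def tPoly (ν μ : ℕ) : Polynomial ℚ :=
  (∏ k ∈ Finset.range μ, (Polynomial.X + Polynomial.C ((ν : ℚ) - (μ : ℚ) + (k : ℚ) + 1))) *
  (∏ l ∈ Finset.range ν, (Polynomial.X + Polynomial.C ((l : ℚ) - (μ : ℚ))))

/-- `P(m,x) = ∑_{ν,μ=0}^{m−1} t(ν,μ,m;x)·t(m−1−μ,m−1−ν,m;x)/(ν!(m−1−ν)!μ!(m−1−μ)!)`, with `P(0,x)=0`. -/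
noncomputable def Ppoly (m : ℕ) : Polynomial ℚ :=
  ∑ ν ∈ Finset.range m, ∑ μ ∈ Finset.range m,
    Polynomial.C (((ν.factorial : ℚ) * ((m - 1 - ν).factorial : ℚ) *
        (μ.factorial : ℚ) * ((m - 1 - μ).factorial : ℚ))⁻¹) *
      (tPoly ν μ * tPoly (m - 1 - μ) (m - 1 - ν))

open Finset Polynomial

namespace Ring

variable {R : Type*} [Ring R] [BinomialRing R]

theorem choose_neg_eq_neg_one_pow_mul (r : R) (n : ℕ) :
    choose (-r) n = (-1) ^ n * choose (r + n - 1) n := by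
  rw [choose_neg, Units.smul_def, Int.coe_negOnePow_natCast, zsmul_eq_mul]
  push_cast
  rfl

theorem choose_neg_one (n : ℕ) : choose (-1 : R) n = (-1) ^ n := by
  rw [choose_neg_eq_neg_one_pow_mul, add_sub_cancel_left, choose_natCast, Nat.choose_self,
    Nat.cast_one, mul_one]

end Ring

theorem Nat.cast_sub_one_sub {R : Type*} [AddCommGroupWithOne R] {s j : ℕ} (h : j < s) :
    ((s - 1 - j : ℕ) : R) = s - 1 - j := by
  rw [Nat.sub_sub, Nat.cast_sub (by omega), Nat.cast_add, Nat.cast_one, sub_add_eq_sub_sub]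

section IntChoose

variable {R : Type*} [Ring R] [BinomialRing R]

noncomputable def intChoose (r : R) (k : ℤ) : R := if 0 ≤ k then Ring.choose r k.toNat else 0

theorem intChoose_natCast (r : R) (k : ℕ) : intChoose r k = Ring.choose r k := by
  simp [intChoose]

theorem intChoose_of_neg (r : R) {k : ℤ} (hk : k < 0) : intChoose r k = 0 := by
  simp [intChoose, not_le.2 hk]

theorem intChoose_natCast_symm (E : ℕ) (k : ℤ) :
    intChoose (E : R) k = intChoose (E : R) (E - k) := by
  unfold intChoose
  rcases lt_or_ge k 0 with hk | hk
  · rw [if_neg (by omega), if_pos (by omega), Ring.choose_natCast,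
      Nat.choose_eq_zero_of_lt (by omega), Nat.cast_zero]
  rcases le_or_gt k E with hkE | hkE
  · rw [if_pos hk, if_pos (by omega), Ring.choose_natCast, Ring.choose_natCast,
      ← Nat.choose_symm (by omega : k.toNat ≤ E)]
    congr 3
    omega
  · rw [if_pos hk, if_neg (by omega), Ring.choose_natCast, Nat.choose_eq_zero_of_lt (by omega),
      Nat.cast_zero]

theorem intChoose_neg_one {k : ℤ} (hk : 0 ≤ k) : intChoose (-1 : R) k = (-1) ^ k.toNat := by
  rw [intChoose, if_pos hk, Ring.choose_neg_one]

end IntChoose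

theorem factorial_mul_choose_eq_prod (a : ℚ) (k : ℕ) :
    (k.factorial : ℚ) * Ring.choose a k = ∏ r ∈ range k, (a - r) := by
  rw [← descPochhammer_eval_eq_prod_range, ← nsmul_eq_mul,
    ← Ring.descPochhammer_eq_factorial_smul_choose, ← aeval_eq_smeval, aeval_def,
    eval₂_eq_eval_map, descPochhammer_map]

theorem prod_range_add_add_one_eq_factorial_mul_choose (a : ℚ) (k : ℕ) :
    ∏ r ∈ range k, (a + r + 1) = k.factorial * Ring.choose (a + k) k := by
  rw [factorial_mul_choose_eq_prod, ← prod_range_reflect]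
  refine prod_congr rfl fun r hr => ?_
  rw [Nat.cast_sub_one_sub (mem_range.1 hr)]
  ring

theorem tPoly_eval (ν μ : ℕ) (x : ℚ) :
    (tPoly ν μ).eval x =
      μ.factorial * Ring.choose (x + ν) μ * (ν.factorial * Ring.choose (x + ν - μ - 1) ν) := by
  simp only [tPoly, eval_mul, eval_prod, eval_add, eval_X, eval_C]
  have h₁ : ∏ k ∈ range μ, (x + (ν - μ + k + 1)) = ∏ k ∈ range μ, (x + ν - μ + k + 1) :=
    prod_congr rfl fun _ _ => by ring
  have h₂ : ∏ l ∈ range ν, (x + (l - μ)) = ∏ l ∈ range ν, (x - μ - 1 + l + 1) :=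
    prod_congr rfl fun _ _ => by ring
  rw [h₁, h₂, prod_range_add_add_one_eq_factorial_mul_choose,
    prod_range_add_add_one_eq_factorial_mul_choose, sub_add_cancel,
    show x - μ - 1 + ν = x + ν - μ - 1 by ring]

theorem tPoly_eval_neg (ν μ : ℕ) (x : ℚ) :
    (tPoly ν μ).eval (-x) = (-1) ^ (ν + μ) * (tPoly μ ν).eval x := by
  have h₁ : Ring.choose (-x + ν) μ = (-1) ^ μ * Ring.choose (x + μ - ν - 1) μ := by
    rw [show -x + ν = -(x - ν) by ring, Ring.choose_neg_eq_neg_one_pow_mul,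
      show x - ν + μ - 1 = x + μ - ν - 1 by ring]
  have h₂ : Ring.choose (-x + ν - μ - 1) ν = (-1) ^ ν * Ring.choose (x + μ) ν := by
    rw [show -x + ν - μ - 1 = -(x - ν + μ + 1) by ring, Ring.choose_neg_eq_neg_one_pow_mul,
      show x - ν + μ + 1 + ν - 1 = x + μ by ring]
  rw [tPoly_eval, tPoly_eval, h₁, h₂]
  ring

theorem tPoly_comp_neg_X (ν μ : ℕ) : (tPoly ν μ).comp (-X) = (-1) ^ (ν + μ) * tPoly μ ν :=
  Polynomial.funext fun x => by simp [tPoly_eval_neg]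

theorem natDegree_tPoly_le (ν μ : ℕ) : (tPoly ν μ).natDegree ≤ μ + ν := by
  refine natDegree_mul_le.trans (add_le_add ?_ ?_) <;>
  refine (natDegree_prod_le _ _).trans (le_of_eq ?_) <;>
  simp only [natDegree_X_add_C, sum_const, card_range, smul_eq_mul, mul_one]

theorem natDegree_Ppoly_le (m : ℕ) : (Ppoly m).natDegree ≤ 2 * (m - 1) := by
  refine natDegree_sum_le_of_forall_le _ _ fun ν hν => natDegree_sum_le_of_forall_le _ _
    fun μ hμ => (natDegree_C_mul_le _ _).trans (natDegree_mul_le.trans ?_)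
  have := natDegree_tPoly_le ν μ
  have := natDegree_tPoly_le (m - 1 - μ) (m - 1 - ν)
  have := mem_range.1 hν
  have := mem_range.1 hμ
  omega

theorem Ppoly_comp_neg_X (m : ℕ) : (Ppoly m).comp (-X) = Ppoly m := by
  simp only [Ppoly, Polynomial.sum_comp]
  rw [sum_comm]
  refine sum_congr rfl fun μ hμ => sum_congr rfl fun ν hν => ?_
  have hsign : (-1 : ℚ[X]) ^ (ν + μ) * (-1) ^ (m - 1 - μ + (m - 1 - ν)) = 1 := by
    rw [← pow_add, show ν + μ + (m - 1 - μ + (m - 1 - ν)) = 2 * (m - 1) by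
      have := mem_range.1 hμ; have := mem_range.1 hν; omega, pow_mul]
    norm_num
  rw [mul_comp, C_comp, mul_comp, tPoly_comp_neg_X, tPoly_comp_neg_X]
  rw [show (ν.factorial : ℚ) * (m - 1 - ν).factorial * μ.factorial * (m - 1 - μ).factorial =
    μ.factorial * (m - 1 - μ).factorial * ν.factorial * (m - 1 - ν).factorial by ring]
  linear_combination (C ((μ.factorial * (m - 1 - μ).factorial * ν.factorial *
    (m - 1 - ν).factorial : ℚ)⁻¹) * tPoly μ ν * tPoly (m - 1 - ν) (m - 1 - μ)) * hsign

noncomputable def binomTerm (m : ℕ) (y : ℚ) (i j : ℕ) : ℚ :=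
  Ring.choose (y - 1 - j) i * Ring.choose (y - 1 - i) j *
    (intChoose (y - 2 - i - j) ((m : ℤ) - 1 - i) * intChoose (y - 2 - i - j) ((m : ℤ) - 1 - j))

theorem Ppoly_eval (m : ℕ) (x : ℚ) :
    (Ppoly m).eval x = ∑ i ∈ range m, ∑ j ∈ range m, binomTerm m (x + m) i j := by
  rw [Ppoly, eval_finsetSum, ← sum_range_reflect]
  refine sum_congr rfl fun i hi => ?_
  rw [eval_finsetSum]
  refine sum_congr rfl fun j hj => ?_
  have hi := mem_range.1 hi
  have hj := mem_range.1 hj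
  have hi' : (m : ℤ) - 1 - i = ((m - 1 - i : ℕ) : ℤ) := by omega
  have hj' : (m : ℤ) - 1 - j = ((m - 1 - j : ℕ) : ℤ) := by omega
  rw [eval_mul, eval_C, eval_mul, tPoly_eval, tPoly_eval, binomTerm, hi', hj',
    intChoose_natCast, intChoose_natCast, Nat.sub_sub_self (by omega : i ≤ m - 1),
    Nat.cast_sub_one_sub hi, Nat.cast_sub_one_sub hj]
  field_simp
  ring_nf

theorem binomTerm_eq_zero_of_le_left {m i : ℕ} (y : ℚ) (j : ℕ) (h : m ≤ i) :
    binomTerm m y i j = 0 := by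
  rw [binomTerm, intChoose_of_neg _ (by omega : (m : ℤ) - 1 - i < 0), zero_mul, mul_zero]

theorem binomTerm_eq_zero_of_le_right {m j : ℕ} (y : ℚ) (i : ℕ) (h : m ≤ j) :
    binomTerm m y i j = 0 := by
  rw [binomTerm, intChoose_of_neg _ (by omega : (m : ℤ) - 1 - j < 0), mul_zero, mul_zero]

theorem Ppoly_eval_natCast {m n s : ℕ} (hs : m + n = s) :
    (Ppoly m).eval (n : ℚ) = ∑ i ∈ range s, ∑ j ∈ range s, binomTerm m s i j := by
  have hms : range m ⊆ range s := range_subset_range.2 (by omega)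
  rw [Ppoly_eval, ← hs, Nat.cast_add, add_comm (n : ℚ), hs,
    sum_subset hms fun i _ hi => sum_eq_zero fun j _ =>
      binomTerm_eq_zero_of_le_left _ _ (by simpa using hi)]
  exact sum_congr rfl fun i _ => sum_subset hms fun j _ hj =>
    binomTerm_eq_zero_of_le_right _ _ (by simpa using hj)

theorem binomTerm_eq_zero_of_le_add {m s i j : ℕ} (hj : j < s) (h : s ≤ i + j) :
    binomTerm m s i j = 0 := by
  rw [binomTerm, ← Nat.cast_sub_one_sub hj, Ring.choose_natCast,
    Nat.choose_eq_zero_of_lt (by omega), Nat.cast_zero, zero_mul, zero_mul]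

theorem binomTerm_swap {m n s i j : ℕ} (hs : m + n = s) (h : i + j + 2 ≤ s) :
    binomTerm m s i j = binomTerm n s j i := by
  obtain ⟨E, rfl⟩ : ∃ E, s = i + j + 2 + E := ⟨s - (i + j + 2), by omega⟩
  have hE : ((i + j + 2 + E : ℕ) : ℚ) - 2 - i - j = E := by push_cast; ring
  have hE' : ((i + j + 2 + E : ℕ) : ℚ) - 2 - j - i = E := by push_cast; ring
  rw [binomTerm, binomTerm, hE, hE', intChoose_natCast_symm E ((m : ℤ) - 1 - i),
    intChoose_natCast_symm E ((m : ℤ) - 1 - j), show (E : ℤ) - (m - 1 - i) = n - 1 - j by omega,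
    show (E : ℤ) - (m - 1 - j) = n - 1 - i by omega]
  ring

theorem binomTerm_antidiag {m n s i : ℕ} (hs : m + n = s) (hi : i < s) :
    binomTerm m s i (s - 1 - i) = if n ≤ i ∧ i < m then (-1) ^ (s - 1) else 0 := by
  have h₁ : (s : ℚ) - 1 - ((s - 1 - i : ℕ) : ℚ) = i := by rw [Nat.cast_sub_one_sub hi]; ring
  have h₂ : (s : ℚ) - 2 - i - ((s - 1 - i : ℕ) : ℚ) = -1 := by rw [Nat.cast_sub_one_sub hi]; ring
  have h₃ : (m : ℤ) - 1 - ((s - 1 - i : ℕ) : ℤ) = i - n := by omega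
  rw [binomTerm, h₁, h₂, h₃, ← Nat.cast_sub_one_sub hi, Ring.choose_natCast, Ring.choose_natCast,
    Nat.choose_self, Nat.choose_self, Nat.cast_one, one_mul, one_mul]
  split_ifs with hc
  · rw [intChoose_neg_one (by omega), intChoose_neg_one (by omega), ← pow_add,
      show s - 1 = ((m : ℤ) - 1 - i).toNat + ((i : ℤ) - n).toNat + 2 * n by omega,
      pow_add (-1 : ℚ) _ (2 * n), pow_mul]
    norm_num
  · rcases (by omega : (m : ℤ) - 1 - i < 0 ∨ (i : ℤ) - n < 0) with h | h <;>
      simp [intChoose_of_neg _ h]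

theorem sum_binomTerm_antidiag {m n s : ℕ} (hs : m + n = s) :
    ∑ i ∈ range s, binomTerm m s i (s - 1 - i) = (-1) ^ (s - 1) * ((m - n : ℕ) : ℚ) := by
  have hfilter : (range s).filter (fun i => n ≤ i ∧ i < m) = Ico n m := by
    ext i
    simp only [mem_filter, mem_range, mem_Ico]
    omega
  rw [sum_congr rfl fun i hi => binomTerm_antidiag hs (mem_range.1 hi), ← sum_filter, hfilter,
    sum_const, Nat.card_Ico, nsmul_eq_mul, mul_comm]

theorem Ppoly_eval_natCast_sub (m n : ℕ) :
    (Ppoly m).eval (n : ℚ) - (Ppoly n).eval (m : ℚ) = (-1) ^ (m + n - 1) * ((m : ℚ) - n) := by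
  obtain ⟨s, hs⟩ : ∃ s, m + n = s := ⟨_, rfl⟩
  have hrow : ∀ i ∈ range s, ∑ j ∈ range s, binomTerm m s i j - ∑ j ∈ range s, binomTerm n s j i =
      binomTerm m s i (s - 1 - i) - binomTerm n s (s - 1 - i) i := by
    intro i hi
    have hi := mem_range.1 hi
    rw [← sum_sub_distrib]
    refine sum_eq_single_of_mem _ (mem_range.2 (by omega)) fun j hj hne => ?_
    have hj := mem_range.1 hj
    rcases lt_or_ge (i + j + 1) s with h | h
    · rw [binomTerm_swap hs (by omega), sub_self]
    · rw [binomTerm_eq_zero_of_le_add hj (by omega), binomTerm_eq_zero_of_le_add hi (by omega),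
        sub_self]
  have hreflect : ∑ i ∈ range s, binomTerm n s (s - 1 - i) i =
      ∑ i ∈ range s, binomTerm n s i (s - 1 - i) := by
    rw [← sum_range_reflect]
    exact sum_congr rfl fun i hi => by rw [Nat.sub_sub_self (by simp at hi; omega)]
  have hcount : ((m - n : ℕ) : ℚ) - ((n - m : ℕ) : ℚ) = m - n := by
    rcases le_total n m with h | h <;> simp [Nat.cast_sub h, Nat.sub_eq_zero_of_le h]
  have hswap : ∑ i ∈ range s, ∑ j ∈ range s, binomTerm n s i j =
      ∑ i ∈ range s, ∑ j ∈ range s, binomTerm n s j i := sum_comm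
  rw [Ppoly_eval_natCast hs, Ppoly_eval_natCast ((add_comm n m).trans hs), hswap,
    ← sum_sub_distrib, sum_congr rfl hrow, sum_sub_distrib, hreflect, sum_binomTerm_antidiag hs,
    sum_binomTerm_antidiag ((add_comm n m).trans hs), ← mul_sub, hcount, hs]

/-- For `m ≥ 1`: (i) `deg P(m,x) ≤ 2(m−1)`; (ii) `P(m,x) = P(m,−x)`;
(iii) `P(m,n) = P(n,m) + (−1)^{m+n−1}(m−n)` for all positive integers `m, n`. -/
theorem stmt1 :
    ∀ m : ℕ, 1 ≤ m →
      (Ppoly m).natDegree ≤ 2 * (m - 1) ∧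
      (Ppoly m).comp (-Polynomial.X) = Ppoly m ∧
      (∀ n : ℕ, 1 ≤ n →
        (Ppoly m).eval (n : ℚ) =
          (Ppoly n).eval (m : ℚ) + (-1 : ℚ) ^ (m + n - 1) * ((m : ℚ) - (n : ℚ))) := by
  intro m _
  refine ⟨natDegree_Ppoly_le m, Ppoly_comp_neg_X m, fun n _ => ?_⟩
  rw [← Ppoly_eval_natCast_sub]
  ring
end

section
/- For all positive integers m and n, the value P(m,n) is an integer; that is, the function (m,n) ↦ P(m,n) maps ℕ×ℕ into ℤ. -/
open Finset Polynomial
open scoped Nat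

lemma exists_prod_range_intCast_add_eq_mul_factorial (c : ℤ) (k : ℕ) :
    ∃ z : ℤ, ∏ i ∈ range k, ((c : ℚ) + i) = z * k ! := by
  obtain ⟨z, hz⟩ := Nat.factorial_coe_dvd_prod k c
  exact ⟨z, by exact_mod_cast hz.trans (mul_comm _ _)⟩

lemma exists_tPoly_eval_intCast_eq_mul_factorial (ν μ : ℕ) (x : ℤ) :
    ∃ z : ℤ, (tPoly ν μ).eval (x : ℚ) = z * (μ ! * ν !) := by
  obtain ⟨z₁, h₁⟩ := exists_prod_range_intCast_add_eq_mul_factorial (x + ν - μ + 1) μ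
  obtain ⟨z₂, h₂⟩ := exists_prod_range_intCast_add_eq_mul_factorial (x - μ) ν
  refine ⟨z₁ * z₂, ?_⟩
  have e₁ : ∏ k ∈ range μ, ((x : ℚ) + ((ν : ℚ) - μ + k + 1))
      = ∏ k ∈ range μ, (((x + ν - μ + 1 : ℤ) : ℚ) + k) :=
    prod_congr rfl fun k _ => by push_cast; ring
  have e₂ : ∏ l ∈ range ν, ((x : ℚ) + ((l : ℚ) - μ)) = ∏ l ∈ range ν, (((x - μ : ℤ) : ℚ) + l) :=
    prod_congr rfl fun l _ => by push_cast; ring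
  simp only [tPoly, eval_mul, eval_prod, eval_add, eval_X, eval_C]
  rw [e₁, e₂, h₁, h₂]
  push_cast
  ring

lemma Ppoly_eval_intCast_mem_range (m : ℕ) (x : ℤ) :
    (Ppoly m).eval (x : ℚ) ∈ (Int.castRingHom ℚ).range := by
  simp only [Ppoly, eval_finsetSum, eval_mul, eval_C]
  refine Subring.sum_mem _ fun ν _ => Subring.sum_mem _ fun μ _ => ?_
  obtain ⟨z₁, h₁⟩ := exists_tPoly_eval_intCast_eq_mul_factorial ν μ x
  obtain ⟨z₂, h₂⟩ := exists_tPoly_eval_intCast_eq_mul_factorial (m - 1 - μ) (m - 1 - ν) x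
  refine ⟨z₁ * z₂, ?_⟩
  rw [h₁, h₂, map_mul, Int.coe_castRingHom]
  field_simp

/-- For all positive integers `m, n`, the value `P(m,n)` is an integer. -/
theorem stmt2 : ∀ m n : ℕ, 0 < m → 0 < n → ∃ z : ℤ, (Ppoly m).eval (n : ℚ) = (z : ℚ) := by
  intro m n _ _
  obtain ⟨z, hz⟩ := Ppoly_eval_intCast_mem_range m n
  exact ⟨z, by exact_mod_cast hz.symm⟩
end

section
/- For all integers n ≥ m ≥ 1 one has P(m,n) = ∑_{ν=0}^{m−1} ∑_{μ=0}^{m−1} (n²/(n+ν−μ)²) · C(n+ν,ν) · C(n−1,μ) · C(n+m−1−μ, m−1−μ) · C(n−1, m−1−ν), where all denominators n+ν−μ are nonzero; in particular, P(m,n) is a natural number for all n ≥ m ≥ 1. -/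
/-!
At an integer `n > μ`, both products in `t(ν,μ)` are rising factorials, so
`t(ν,μ)(n) / (ν! μ!) = C(n+ν, μ) · C(n-μ-1+ν, ν)` is a natural number. Absorption
`(k+1) C(k,j) = (k+1-j) C(k+1,j)` together with the symmetry
`C(N,μ) C(N-μ,ν) = C(N,ν) C(N-ν,μ)` rewrites it as `n/(n+ν-μ) · C(n+ν,ν) · C(n-1,μ)`.
Each summand of `P(m,n)` is the product of this quantity for `(ν,μ)` and for
`(m-1-μ, m-1-ν)`, and both pairs have the same `n+ν-μ`.
-/

open Finset Polynomial Nat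

theorem choose_mul_choose_comm (N μ ν : ℕ) :
    N.choose μ * (N - μ).choose ν = N.choose ν * (N - ν).choose μ := by
  have hμ := choose_mul (n := N) (le_add_right μ ν)
  have hν := choose_mul (n := N) (le_add_left ν μ)
  rw [add_tsub_cancel_left] at hμ
  rw [add_tsub_cancel_right] at hν
  rw [← hμ, ← hν, choose_symm_add]

theorem succ_mul_choose_mul_choose (ν μ a : ℕ) :
    (a + ν + 1) * (ν + a + 1 + μ).choose μ * (a + ν).choose ν =
      (μ + a + 1) * (μ + a + 1 + ν).choose ν * (μ + a).choose μ := by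
  have hν := choose_mul_succ_eq (a + ν) ν
  have hμ := choose_mul_succ_eq (μ + a) μ
  have tri := choose_mul_choose_comm (μ + a + 1 + ν) μ ν
  rw [show a + ν + 1 - ν = a + 1 by omega] at hν
  rw [show μ + a + 1 - μ = a + 1 by omega] at hμ
  rw [show μ + a + 1 + ν - μ = a + ν + 1 by omega, add_tsub_cancel_right] at tri
  calc (a + ν + 1) * (ν + a + 1 + μ).choose μ * (a + ν).choose ν
      = (μ + a + 1 + ν).choose μ * ((a + ν).choose ν * (a + ν + 1)) := by
        rw [show ν + a + 1 + μ = μ + a + 1 + ν by omega]; ring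
    _ = (μ + a + 1 + ν).choose ν * (μ + a + 1).choose μ * (a + 1) := by rw [hν, ← mul_assoc, tri]
    _ = (μ + a + 1) * (μ + a + 1 + ν).choose ν * (μ + a).choose μ := by rw [mul_assoc, ← hμ]; ring

theorem prod_range_add_add_one (a b : ℕ) :
    ∏ k ∈ range b, (a + k + 1) = b ! * (a + b).choose b := by
  rw [← ascFactorial_eq_factorial_mul_choose, ascFactorial_eq_prod_range]
  exact prod_congr rfl fun k _ => by ring

theorem eval_tPoly_natCast (ν μ a : ℕ) :
    (tPoly ν μ).eval ((μ + a + 1 : ℕ) : ℚ) =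
      ((μ ! * (ν + a + 1 + μ).choose μ * (ν ! * (a + ν).choose ν) : ℕ) : ℚ) := by
  rw [← prod_range_add_add_one, ← prod_range_add_add_one, tPoly, eval_mul, eval_prod, eval_prod]
  push_cast
  congr 1 <;> exact prod_congr rfl fun k _ => by simp only [eval_add, eval_X, eval_C]; ring

theorem eval_tPoly_div_factorial_mem_rangeS {ν μ n : ℕ} (h : μ < n) :
    (tPoly ν μ).eval (n : ℚ) / (ν ! * μ !) ∈ (Nat.castRingHom ℚ).rangeS := by
  obtain ⟨a, rfl⟩ : ∃ a, n = μ + a + 1 := ⟨n - μ - 1, by omega⟩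
  refine ⟨(ν + a + 1 + μ).choose μ * (a + ν).choose ν, ?_⟩
  rw [eval_tPoly_natCast]
  push_cast
  field_simp

theorem eval_tPoly_div_factorial {ν μ n : ℕ} (h : μ < n) :
    (tPoly ν μ).eval (n : ℚ) / (ν ! * μ !) =
      n / (n + ν - μ) * (n + ν).choose ν * (n - 1).choose μ := by
  obtain ⟨a, rfl⟩ : ∃ a, n = μ + a + 1 := ⟨n - μ - 1, by omega⟩
  have key : ((a + ν + 1) * (ν + a + 1 + μ).choose μ * (a + ν).choose ν : ℚ) =
      (μ + a + 1) * (μ + a + 1 + ν).choose ν * (μ + a).choose μ := by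
    exact_mod_cast succ_mul_choose_mul_choose ν μ a
  have hden : ((μ + a + 1 : ℕ) : ℚ) + ν - μ = a + ν + 1 := by push_cast; ring
  rw [eval_tPoly_natCast, add_tsub_cancel_right, hden]
  push_cast
  field_simp
  linear_combination key

theorem eval_Ppoly (m : ℕ) (x : ℚ) :
    (Ppoly m).eval x = ∑ ν ∈ range m, ∑ μ ∈ range m,
      (tPoly ν μ).eval x / (ν ! * μ !) *
        ((tPoly (m - 1 - μ) (m - 1 - ν)).eval x / ((m - 1 - μ)! * (m - 1 - ν)!)) := by
  simp only [Ppoly, eval_finsetSum, eval_mul, eval_C]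
  refine sum_congr rfl fun ν _ => sum_congr rfl fun μ _ => ?_
  field_simp

/-- For `n ≥ m ≥ 1`:
`P(m,n) = ∑_{ν,μ=0}^{m−1} (n²/(n+ν−μ)²)·C(n+ν,ν)·C(n−1,μ)·C(n+m−1−μ,m−1−μ)·C(n−1,m−1−ν)`,
all denominators being nonzero; in particular `P(m,n)` is a natural number. -/
theorem stmt3 : ∀ m n : ℕ, 1 ≤ m → m ≤ n →
    (∀ ν μ : ℕ, ν < m → μ < m → ((n : ℚ) + (ν : ℚ) - (μ : ℚ)) ≠ 0) ∧
    (Ppoly m).eval (n : ℚ) =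
      (∑ ν ∈ Finset.range m, ∑ μ ∈ Finset.range m,
        (n : ℚ) ^ 2 / ((n : ℚ) + (ν : ℚ) - (μ : ℚ)) ^ 2 *
          ((n + ν).choose ν : ℚ) * ((n - 1).choose μ : ℚ) *
          ((n + m - 1 - μ).choose (m - 1 - μ) : ℚ) * ((n - 1).choose (m - 1 - ν) : ℚ)) ∧
    (∃ N : ℕ, (Ppoly m).eval (n : ℚ) = (N : ℚ)) := by
  intro m n _ hmn
  refine ⟨fun ν μ _ hμ => ?_, ?_, ?_⟩
  · have : (μ : ℚ) < n := by exact_mod_cast hμ.trans_le hmn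
    exact ne_of_gt (by linarith [ν.cast_nonneg (α := ℚ)])
  · rw [eval_Ppoly]
    refine sum_congr rfl fun ν hν => sum_congr rfl fun μ hμ => ?_
    rw [mem_range] at hν hμ
    have partner : (n : ℚ) + (m - 1 - μ : ℕ) - (m - 1 - ν : ℕ) = n + ν - μ := by
      have : ((m - 1 - μ : ℕ) : ℚ) + μ = (m - 1 - ν : ℕ) + ν := by
        exact_mod_cast (by omega : m - 1 - μ + μ = m - 1 - ν + ν)
      linarith
    rw [eval_tPoly_div_factorial (by omega), eval_tPoly_div_factorial (by omega), partner,
      show n + (m - 1 - μ) = n + m - 1 - μ by omega]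
    -- otherwise `ring` expands `(n + ν - μ) ^ 2` under the inverse and cannot match the two sides
    generalize (n : ℚ) + ν - μ = d
    ring
  · have hmem : (Ppoly m).eval (n : ℚ) ∈ (Nat.castRingHom ℚ).rangeS := by
      rw [eval_Ppoly]
      exact sum_mem fun ν hν => sum_mem fun μ hμ => mul_mem
        (eval_tPoly_div_factorial_mem_rangeS (by rw [mem_range] at hμ; omega))
        (eval_tPoly_div_factorial_mem_rangeS (by rw [mem_range] at hν; omega))
    obtain ⟨N, hN⟩ := hmem
    exact ⟨N, hN.symm⟩
end

section
/- For every integer m ≥ 1 there is an identity of polynomials in x: P(m+1,x) + 2·P(m,x) + P(m−1,x) = A₁(m,x). -/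
/-- The polynomial `[x choose k] = x(x−1)⋯(x−k+1)/k!`. -/
noncomputable def binomPoly (k : ℕ) : Polynomial ℚ :=
  Polynomial.C ((k.factorial : ℚ))⁻¹ *
    ∏ i ∈ Finset.range k, (Polynomial.X - Polynomial.C (i : ℚ))

/-- `a₁(m,x) = ∑_{ν=0}^m [x−1+ν choose ν]·[x choose m−ν]`. -/
noncomputable def a1Poly (m : ℕ) : Polynomial ℚ :=
  ∑ ν ∈ Finset.range (m + 1),
    (binomPoly ν).comp (Polynomial.X + Polynomial.C ((ν : ℚ) - 1)) * binomPoly (m - ν)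

/-- `A₁(m,x) = a₁(m,x)²`. -/
noncomputable def A1Poly (m : ℕ) : Polynomial ℚ := (a1Poly m) ^ 2

/-!
Write `e ν = [x−1+ν choose ν]` and `d ν μ = t(ν,μ)/(ν! μ!)`. Since `(x+ν−μ)·t(ν,μ)` is the rising
product `(x−μ)(x−μ+1)⋯(x+ν)`, we get `(ν+1)! (μ+1)! · e (ν+1) · [x choose μ+1] = x(x+ν−μ)·t(ν,μ)`;
together with `t(ν+1,μ+1) = (x−μ−1)(x+ν+1)·t(ν,μ)` and
`x(x+ν−μ) = (x−μ−1)(x+ν+1) + (ν+1)(μ+1)` this yields the local identity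
`e ν · [x choose μ] = d ν μ + d (ν−1) (μ−1)` (the second term being `0` when `ν = 0` or `μ = 0`).
Squaring `a₁(m) = ∑ e ν · [x choose m−ν]` and reversing the order of the second factor,
`A₁(m) = ∑_{ν,μ ≤ m} (e ν · [x choose μ]) (e (m−μ) · [x choose m−ν])`. Expanding both factors by
the local identity splits this into four sums of the shape defining `P`, which are
`P(m+1)`, `P(m)`, `P(m)` and `P(m−1)`.
-/

open Polynomial Finset
open scoped Nat

section CrossSum

variable {R : Type*} [CommSemiring R]

def crossSum (f g : ℕ → ℕ → R) (N : ℕ) : R :=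
  ∑ ν ∈ range N, ∑ μ ∈ range N, f ν μ * g (N - 1 - μ) (N - 1 - ν)

def shiftDiag (f : ℕ → ℕ → R) : ℕ → ℕ → R
  | ν + 1, μ + 1 => f ν μ
  | _, _ => 0

@[simp] lemma shiftDiag_zero_left (f : ℕ → ℕ → R) (μ : ℕ) : shiftDiag f 0 μ = 0 := by
  cases μ <;> rfl

@[simp] lemma shiftDiag_zero_right (f : ℕ → ℕ → R) (ν : ℕ) : shiftDiag f ν 0 = 0 := by
  cases ν <;> rfl

@[simp] lemma shiftDiag_succ_succ (f : ℕ → ℕ → R) (ν μ : ℕ) :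
    shiftDiag f (ν + 1) (μ + 1) = f ν μ := rfl

lemma crossSum_comm (f g : ℕ → ℕ → R) (N : ℕ) : crossSum f g N = crossSum g f N := by
  unfold crossSum
  rw [sum_comm, ← sum_range_reflect]
  refine sum_congr rfl fun μ hμ => ?_
  rw [← sum_range_reflect]
  refine sum_congr rfl fun ν hν => ?_
  rw [mem_range] at hμ hν
  rw [mul_comm, Nat.sub_sub_self (by omega), Nat.sub_sub_self (by omega)]

lemma crossSum_add_left (f f' g : ℕ → ℕ → R) (N : ℕ) :
    crossSum (f + f') g N = crossSum f g N + crossSum f' g N := by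
  simp only [crossSum, Pi.add_apply, add_mul, sum_add_distrib]

lemma crossSum_add_right (f g g' : ℕ → ℕ → R) (N : ℕ) :
    crossSum f (g + g') N = crossSum f g N + crossSum f g' N := by
  simp only [crossSum, Pi.add_apply, mul_add, sum_add_distrib]

lemma crossSum_shiftDiag_right (f g : ℕ → ℕ → R) (N : ℕ) :
    crossSum f (shiftDiag g) (N + 1) = crossSum f g N := by
  unfold crossSum
  rw [sum_range_succ]
  simp only [add_tsub_cancel_right, tsub_self, shiftDiag_zero_right, mul_zero, sum_const_zero,
    add_zero]
  refine sum_congr rfl fun ν hν => ?_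
  rw [sum_range_succ]
  simp only [tsub_self, shiftDiag_zero_left, mul_zero, add_zero]
  refine sum_congr rfl fun μ hμ => ?_
  rw [mem_range] at hμ hν
  rw [show N - μ = N - 1 - μ + 1 by omega, show N - ν = N - 1 - ν + 1 by omega,
    shiftDiag_succ_succ]

lemma crossSum_shiftDiag_left (f g : ℕ → ℕ → R) (N : ℕ) :
    crossSum (shiftDiag f) g (N + 1) = crossSum f g N := by
  rw [crossSum_comm, crossSum_shiftDiag_right, crossSum_comm]

lemma crossSum_shiftDiag_shiftDiag (f g : ℕ → ℕ → R) (N : ℕ) :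
    crossSum (shiftDiag f) (shiftDiag g) (N + 1) = crossSum f g (N - 1) := by
  cases N with
  | zero => simp [crossSum]
  | succ N => rw [crossSum_shiftDiag_left, crossSum_shiftDiag_right, Nat.add_sub_cancel]

lemma crossSum_mul_self_eq_sq (e b : ℕ → R) (m : ℕ) :
    crossSum (fun ν μ => e ν * b μ) (fun ν μ => e ν * b μ) (m + 1) =
      (∑ ν ∈ range (m + 1), e ν * b (m - ν)) ^ 2 := by
  rw [sq]
  nth_rw 2 [← sum_range_reflect]
  rw [sum_mul_sum]
  refine sum_congr rfl fun ν hν => sum_congr rfl fun μ hμ => ?_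
  rw [mem_range] at hμ
  rw [add_tsub_cancel_right, Nat.sub_sub_self (by omega)]
  ring

end CrossSum

section RisingProd

variable {R : Type*} [CommRing R]

noncomputable def risingProd (a : R) (n : ℕ) : R[X] :=
  ∏ k ∈ range n, (X + C (a + k))

@[simp] lemma risingProd_zero (a : R) : risingProd a 0 = 1 := prod_range_zero _

@[simp] lemma risingProd_one (a : R) : risingProd a 1 = X + C a := by
  simp [risingProd]

lemma risingProd_add (a : R) (n m : ℕ) :
    risingProd a (n + m) = risingProd a n * risingProd (a + n) m := by
  simp only [risingProd, prod_range_add, Nat.cast_add, add_assoc]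

lemma risingProd_succ (a : R) (n : ℕ) :
    risingProd a (n + 1) = risingProd a n * (X + C (a + n)) :=
  prod_range_succ _ _

lemma risingProd_succ' (a : R) (n : ℕ) :
    risingProd a (n + 1) = (X + C a) * risingProd (a + 1) n := by
  rw [add_comm, risingProd_add, risingProd_one, Nat.cast_one]

lemma prod_X_sub_C_comp_X_add_C (b : R) (n : ℕ) :
    (∏ i ∈ range n, (X - C (i : R))).comp (X + C b) = risingProd (b + 1 - n) n := by
  induction n with
  | zero => simp
  | succ n ih =>
    rw [prod_range_succ, mul_comp, ih, risingProd_succ',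
      show b + 1 - ((n + 1 : ℕ) : R) + 1 = b + 1 - n by push_cast; ring, mul_comm]
    simp only [sub_comp, X_comp, C_comp, Nat.cast_add, Nat.cast_one, map_sub, map_add, map_one]
    ring

end RisingProd

lemma binomPoly_eq (μ : ℕ) : binomPoly μ = C ((μ ! : ℚ)⁻¹) * risingProd (1 - (μ : ℚ)) μ := by
  rw [binomPoly, ← zero_add (1 - (μ : ℚ)), ← add_sub_assoc, ← prod_X_sub_C_comp_X_add_C, map_zero,
    add_zero, comp_X]

lemma binomPoly_comp_X_add_C (ν : ℕ) :
    (binomPoly ν).comp (X + C ((ν : ℚ) - 1)) = C ((ν ! : ℚ)⁻¹) * risingProd 0 ν := by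
  rw [binomPoly, mul_comp, C_comp, prod_X_sub_C_comp_X_add_C, sub_add_cancel, sub_self]

lemma tPoly_eq_risingProd (ν μ : ℕ) :
    tPoly ν μ = risingProd ((ν : ℚ) - μ + 1) μ * risingProd (-(μ : ℚ)) ν := by
  unfold tPoly risingProd
  congr 1 <;> refine prod_congr rfl fun k _ => ?_ <;> ring_nf

lemma tPoly_succ_succ (ν μ : ℕ) :
    tPoly (ν + 1) (μ + 1) = (X - C ((μ : ℚ) + 1)) * (X + C ((ν : ℚ) + 1)) * tPoly ν μ := by
  rw [tPoly_eq_risingProd, tPoly_eq_risingProd, risingProd_succ, risingProd_succ',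
    show ((ν + 1 : ℕ) : ℚ) - (μ + 1 : ℕ) + 1 = ν - μ + 1 by push_cast; ring,
    show -((μ + 1 : ℕ) : ℚ) + 1 = -μ by push_cast; ring]
  simp only [Nat.cast_add, Nat.cast_one, map_add, map_sub, map_neg, map_natCast, map_one]
  ring

lemma risingProd_succ_mul_risingProd_neg (ν μ : ℕ) :
    risingProd (0 : ℚ) (ν + 1) * risingProd (-(μ : ℚ)) (μ + 1) =
      X * (X + C ((ν : ℚ) - μ)) * tPoly ν μ := by
  have hleft : risingProd (0 : ℚ) (ν + 1) = X * risingProd 1 ν := by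
    rw [risingProd_succ', map_zero, add_zero, zero_add]
  have hboth : risingProd (-(μ : ℚ)) (μ + 1) * risingProd 1 ν =
      risingProd (-(μ : ℚ)) ν * (X + C ((ν : ℚ) - μ)) * risingProd ((ν : ℚ) - μ + 1) μ :=
    calc risingProd (-(μ : ℚ)) (μ + 1) * risingProd 1 ν
        = risingProd (-(μ : ℚ)) (μ + 1 + ν) := by
          rw [risingProd_add _ (μ + 1), show -(μ : ℚ) + (μ + 1 : ℕ) = 1 by push_cast; ring]
      _ = risingProd (-(μ : ℚ)) (ν + 1 + μ) := by rw [show μ + 1 + ν = ν + 1 + μ by omega]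
      _ = _ := by
          rw [risingProd_add, risingProd_succ, neg_add_eq_sub,
            show -(μ : ℚ) + (ν + 1 : ℕ) = ν - μ + 1 by push_cast; ring]
  rw [hleft, tPoly_eq_risingProd, mul_assoc, mul_comm (risingProd 1 ν), hboth]
  ring

lemma inv_factorial_eq_inv_factorial_succ_mul {K : Type*} [Field K] [CharZero K] (n : ℕ) :
    (n ! : K)⁻¹ = ((n + 1)! : K)⁻¹ * (n + 1) := by
  rw [Nat.factorial_succ]
  push_cast
  field_simp

noncomputable def normTPoly (ν μ : ℕ) : ℚ[X] :=
  C ((ν ! : ℚ)⁻¹) * C ((μ ! : ℚ)⁻¹) * tPoly ν μ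

lemma normTPoly_succ_succ_add (ν μ : ℕ) :
    normTPoly (ν + 1) (μ + 1) + normTPoly ν μ =
      C (((ν + 1)! : ℚ)⁻¹) * risingProd 0 (ν + 1) *
        (C (((μ + 1)! : ℚ)⁻¹) * risingProd (-(μ : ℚ)) (μ + 1)) := by
  rw [normTPoly, normTPoly, tPoly_succ_succ, inv_factorial_eq_inv_factorial_succ_mul ν,
    inv_factorial_eq_inv_factorial_succ_mul μ]
  calc _ = C (((ν + 1)! : ℚ)⁻¹) * C (((μ + 1)! : ℚ)⁻¹) * tPoly ν μ *
        ((X - C ((μ : ℚ) + 1)) * (X + C ((ν : ℚ) + 1)) + C (((ν : ℚ) + 1) * ((μ : ℚ) + 1))) := by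
        simp only [map_mul]
        ring
    _ = C (((ν + 1)! : ℚ)⁻¹) * C (((μ + 1)! : ℚ)⁻¹) * (X * (X + C ((ν : ℚ) - μ)) * tPoly ν μ) := by
        simp only [map_mul, map_add, map_sub, map_natCast, map_one]
        ring
    _ = _ := by
        rw [← risingProd_succ_mul_risingProd_neg]
        ring

lemma risingProd_mul_binomPoly (ν μ : ℕ) :
    C ((ν ! : ℚ)⁻¹) * risingProd 0 ν * binomPoly μ = normTPoly ν μ + shiftDiag normTPoly ν μ := by
  rw [binomPoly_eq]
  rcases ν with _ | ν <;> rcases μ with _ | μ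
  · simp [normTPoly, tPoly]
  · simp [normTPoly, tPoly_eq_risingProd, neg_add_eq_sub]
  · simp [normTPoly, tPoly_eq_risingProd]
  · rw [shiftDiag_succ_succ, normTPoly_succ_succ_add,
      show 1 - ((μ + 1 : ℕ) : ℚ) = -μ by push_cast; ring]

lemma Ppoly_eq_crossSum (m : ℕ) : Ppoly m = crossSum normTPoly normTPoly m := by
  refine sum_congr rfl fun ν _ => sum_congr rfl fun μ _ => ?_
  simp only [normTPoly, mul_inv, map_mul]
  ring

/-- For every `m ≥ 1`, `P(m+1,x) + 2·P(m,x) + P(m−1,x) = A₁(m,x)` as polynomials. -/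
theorem stmt5 : ∀ m : ℕ, 1 ≤ m →
    Ppoly (m + 1) + 2 * Ppoly m + Ppoly (m - 1) = A1Poly m := by
  intro m _
  have hsplit : normTPoly + shiftDiag normTPoly =
      fun ν μ => C ((ν ! : ℚ)⁻¹) * risingProd 0 ν * binomPoly μ := by
    funext ν μ
    exact (risingProd_mul_binomPoly ν μ).symm
  have hA : A1Poly m =
      crossSum (normTPoly + shiftDiag normTPoly) (normTPoly + shiftDiag normTPoly) (m + 1) := by
    rw [hsplit, crossSum_mul_self_eq_sq (fun ν => C ((ν ! : ℚ)⁻¹) * risingProd 0 ν) binomPoly,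
      A1Poly, a1Poly]
    simp only [binomPoly_comp_X_add_C]
  rw [hA, crossSum_add_left, crossSum_add_right, crossSum_add_right, crossSum_shiftDiag_right,
    crossSum_shiftDiag_left, crossSum_shiftDiag_shiftDiag]
  simp only [Ppoly_eq_crossSum]
  ring
end

section
/- For every integer m ≥ 1 there is an identity of polynomials in x: m²·A₁(m,x) = x²·A₂(x,m). Consequently, for all positive integers m and n the function m²·A(m,n) is symmetric: m²·A(m,n) = n²·A(n,m). -/
/-- `a₂(x,n) = ∑_{ν=0}^n C(n,ν)·[x−ν+n−1 choose n−1]`. -/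
noncomputable def a2Poly (n : ℕ) : Polynomial ℚ :=
  ∑ ν ∈ Finset.range (n + 1),
    Polynomial.C ((n.choose ν : ℚ)) *
      (binomPoly (n - 1)).comp (Polynomial.X + Polynomial.C ((n : ℚ) - 1 - (ν : ℚ)))

/-- `A₂(x,n) = a₂(x,n)²`. -/
noncomputable def A2Poly (n : ℕ) : Polynomial ℚ := (a2Poly n) ^ 2

/-- `a(k,l) = ∑_{ν=0}^k C(l,ν)·C(l−1+k−ν, l−1)`. -/
def aNum (k l : ℕ) : ℕ :=
  ∑ ν ∈ Finset.range (k + 1), l.choose ν * (l - 1 + k - ν).choose (l - 1)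

/-- `A(k,l) = a(k,l)²`. -/
def ANum (k l : ℕ) : ℕ := (aNum k l) ^ 2

open Polynomial Finset

lemma aNum_eq_sum_two_pow_mul {m n : ℕ} (hm : 1 ≤ m) (hn : 1 ≤ n) :
    aNum m n = ∑ k ∈ range (m + 1), 2 ^ k * n.choose k * (m - 1).choose (m - k) := by
  have vandermonde : ∀ ν ∈ range (m + 1), n.choose ν * (n - 1 + m - ν).choose (n - 1) =
      ∑ s ∈ range (m - ν + 1), n.choose ν * ((n - ν).choose s * (m - 1).choose (m - ν - s)) := by
    intro ν hν
    rw [mem_range] at hν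
    rcases le_or_gt ν n with hνn | hνn
    · rw [show n - 1 + m - ν = (n - ν) + (m - 1) by omega,
        Nat.choose_symm_of_eq_add (show (n - ν) + (m - 1) = (n - 1) + (m - ν) by omega),
        Nat.add_choose_eq, Nat.sum_antidiagonal_eq_sum_range_succ_mk, mul_sum]
    · simp [Nat.choose_eq_zero_of_lt hνn]
  have reindex : ∀ ν s,
      n.choose ν * ((n - ν).choose s * (m - 1).choose (m - ν - s)) =
        n.choose (ν + s) * (ν + s).choose ν * (m - 1).choose (m - (ν + s)) := by
    intro ν s
    rw [Nat.choose_mul (Nat.le_add_right ν s), Nat.add_sub_cancel_left, Nat.sub_sub]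
    ring
  calc aNum m n
      = ∑ ν ∈ range (m + 1), ∑ s ∈ range (m + 1 - ν),
          n.choose (ν + s) * (ν + s).choose ν * (m - 1).choose (m - (ν + s)) := by
        rw [aNum, sum_congr rfl vandermonde]
        refine sum_congr rfl fun ν hν => ?_
        rw [show m + 1 - ν = m - ν + 1 by rw [mem_range] at hν; omega]
        exact sum_congr rfl fun s _ => reindex ν s
    _ = ∑ k ∈ range (m + 1), ∑ ν ∈ range (k + 1),
          n.choose k * k.choose ν * (m - 1).choose (m - k) := by
        rw [← sum_range_diag_flip]
        refine sum_congr rfl fun k _ => sum_congr rfl fun ν hν => ?_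
        rw [Nat.add_sub_cancel' (by rw [mem_range] at hν; omega)]
    _ = _ := by
        refine sum_congr rfl fun k _ => ?_
        rw [← sum_mul, ← mul_sum, Nat.sum_range_choose]
        ring

lemma mul_choose_pred_sub {m k : ℕ} (hk : k ≤ m) :
    m * (m - 1).choose (m - k) = k * m.choose k := by
  rcases k with _ | j
  · rcases m with _ | p
    · simp
    · simp
  · obtain ⟨p, rfl⟩ : ∃ p, m = p + 1 := ⟨m - 1, by omega⟩
    rw [Nat.add_sub_cancel, show p + 1 - (j + 1) = p - j by omega,
      Nat.choose_symm (by omega), Nat.add_one_mul_choose_eq, mul_comm]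

lemma mul_aNum_eq_sum {m n : ℕ} (hm : 1 ≤ m) (hn : 1 ≤ n) :
    m * aNum m n = ∑ k ∈ range (m + n + 1), 2 ^ k * k * (m.choose k * n.choose k) := by
  have vanish : ∀ k ∈ range (m + n + 1), k ∉ range (m + 1) →
      2 ^ k * k * (m.choose k * n.choose k) = 0 := fun k _ hk => by
    rw [Nat.choose_eq_zero_of_lt (by rw [mem_range] at hk; omega), zero_mul, mul_zero]
  rw [aNum_eq_sum_two_pow_mul hm hn, mul_sum,
    ← sum_subset (range_subset_range.mpr (by omega)) vanish]
  refine sum_congr rfl fun k hk => ?_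
  rw [mem_range] at hk
  calc m * (2 ^ k * n.choose k * (m - 1).choose (m - k))
      = 2 ^ k * n.choose k * (m * (m - 1).choose (m - k)) := by ring
    _ = 2 ^ k * k * (m.choose k * n.choose k) := by rw [mul_choose_pred_sub (by omega)]; ring

lemma mul_aNum_comm {m n : ℕ} (hm : 1 ≤ m) (hn : 1 ≤ n) :
    m * aNum m n = n * aNum n m := by
  rw [mul_aNum_eq_sum hm hn, mul_aNum_eq_sum hn hm, Nat.add_comm n m]
  exact sum_congr rfl fun k _ => by ring

lemma aNum_eq_sum_range_of_le {k l N : ℕ} (hk : 1 ≤ k) (hkN : k ≤ N) :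
    aNum k l = ∑ ν ∈ range (N + 1), l.choose ν * (l - 1 + k - ν).choose (l - 1) := by
  refine sum_subset (range_subset_range.mpr (by omega)) fun ν _ hν => ?_
  rw [mem_range] at hν
  rcases le_or_gt ν l with hνl | hνl
  · rw [Nat.choose_eq_zero_of_lt (by omega : l - 1 + k - ν < l - 1), mul_zero]
  · rw [Nat.choose_eq_zero_of_lt hνl, zero_mul]

lemma binomPoly_eval_natCast (k n : ℕ) : (binomPoly k).eval (n : ℚ) = n.choose k := by
  have hprod : ∏ i ∈ range k, (X - C (i : ℚ)) = descPochhammer ℚ k := by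
    induction k with
    | zero => simp
    | succ k ih => rw [prod_range_succ, ih, descPochhammer_succ_right]; simp
  rw [binomPoly, hprod, eval_mul, eval_C, descPochhammer_eval_eq_descFactorial,
    Nat.descFactorial_eq_factorial_mul_choose]
  have : (k.factorial : ℚ) ≠ 0 := by exact_mod_cast k.factorial_ne_zero
  push_cast
  field_simp

lemma a1Poly_eval_natCast (m : ℕ) {n : ℕ} (hn : 1 ≤ n) :
    (a1Poly m).eval (n : ℚ) = aNum m n := by
  have eval_term : ∀ ν, ((binomPoly ν).comp (X + C ((ν : ℚ) - 1)) * binomPoly (m - ν)).eval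
      (n : ℚ) = (n - 1 + ν).choose ν * n.choose (m - ν) := fun ν => by
    rw [eval_mul, eval_comp, eval_add, eval_X, eval_C,
      show (n : ℚ) + ((ν : ℚ) - 1) = ((n - 1 + ν : ℕ) : ℚ) by push_cast [hn]; ring,
      binomPoly_eval_natCast, binomPoly_eval_natCast]
  rw [a1Poly, eval_finsetSum, aNum, Nat.cast_sum,
    ← sum_range_reflect (fun ν => ((n.choose ν * (n - 1 + m - ν).choose (n - 1) : ℕ) : ℚ))]
  refine sum_congr rfl fun ν hν => ?_
  rw [mem_range] at hν
  rw [eval_term, show m + 1 - 1 - ν = m - ν by omega,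
    show n - 1 + m - (m - ν) = n - 1 + ν by omega, Nat.choose_symm_add]
  push_cast
  ring

lemma a2Poly_eval_natCast {m n : ℕ} (hm : 1 ≤ m) (hn : 1 ≤ n) :
    (a2Poly m).eval (n : ℚ) = aNum n m := by
  have eval_term : ∀ ν ∈ range (m + 1),
      (C (m.choose ν : ℚ) * (binomPoly (m - 1)).comp (X + C ((m : ℚ) - 1 - ν))).eval (n : ℚ) =
        ((m.choose ν * (m - 1 + n - ν).choose (m - 1) : ℕ) : ℚ) := fun ν hν => by
    rw [mem_range] at hν
    rw [eval_mul, eval_comp, eval_add, eval_X, eval_C, eval_C,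
      show (n : ℚ) + ((m : ℚ) - 1 - ν) = ((m - 1 + n - ν : ℕ) : ℚ) by
        push_cast [Nat.sub_add_comm hm, Nat.cast_sub (by omega : ν ≤ m - 1 + n), hm]; ring,
      binomPoly_eval_natCast]
    push_cast
    rfl
  have vanish : ∀ ν ∈ range (m + n + 1), ν ∉ range (m + 1) →
      m.choose ν * (m - 1 + n - ν).choose (m - 1) = 0 := fun ν _ hν => by
    rw [Nat.choose_eq_zero_of_lt (by rw [mem_range] at hν; omega), zero_mul]
  rw [a2Poly, eval_finsetSum, sum_congr rfl eval_term, ← Nat.cast_sum,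
    sum_subset (range_subset_range.mpr (by omega)) vanish,
    aNum_eq_sum_range_of_le (N := m + n) hn (by omega)]

lemma C_mul_a1Poly_eq_X_mul_a2Poly {m : ℕ} (hm : 1 ≤ m) :
    C (m : ℚ) * a1Poly m = X * a2Poly m := by
  have hinj : Function.Injective (fun k : ℕ => ((k + 1 : ℕ) : ℚ)) := fun a b h => by simpa using h
  refine eq_of_infinite_eval_eq _ _ ((Set.infinite_range_of_injective hinj).mono ?_)
  rintro _ ⟨k, rfl⟩
  simp only [Set.mem_ofPred_eq, eval_mul, eval_C, eval_X]
  rw [a1Poly_eval_natCast m (by omega), a2Poly_eval_natCast hm (by omega)]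
  exact_mod_cast mul_aNum_comm hm (Nat.le_add_left 1 k)

/-- For every `m ≥ 1`, `m²·A₁(m,x) = x²·A₂(x,m)` as polynomials; consequently
`m²·A(m,n) = n²·A(n,m)` for all positive integers `m, n`. -/
theorem stmt9 :
    (∀ m : ℕ, 1 ≤ m →
      Polynomial.C ((m : ℚ) ^ 2) * A1Poly m = Polynomial.X ^ 2 * A2Poly m) ∧
    (∀ m n : ℕ, 1 ≤ m → 1 ≤ n → m ^ 2 * ANum m n = n ^ 2 * ANum n m) := by
  constructor
  · intro m hm
    rw [A1Poly, A2Poly, C_pow, ← mul_pow, ← mul_pow, C_mul_a1Poly_eq_X_mul_a2Poly hm]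
  · intro m n hm hn
    rw [ANum, ANum, ← mul_pow, ← mul_pow, mul_aNum_comm hm hn]
end

section
/- Let n > m ≥ 1 be integers and 0 ≤ ν, μ ≤ m. Then a(ν,μ,m,n) = b(ν,μ,m,n), where a(ν,μ,m,n) = C(n−1+ν,ν)·C(n,m−ν)·C(n−1+m−μ,m−μ)·C(n,μ), and b(ν,μ,m,n) = D_n(ν+1, n−1−μ)·D_n(m−μ+1, n−1−m+ν) + (1−δ_{ν,m})(1−δ_{μ,m})·D_n(ν+1, n−1−μ)·D_n(m−μ, n−m+ν) + (1−δ_{ν,0})(1−δ_{μ,0})·D_n(ν, n−μ)·D_n(m−μ+1, n−1−m+ν) + (1−δ_{ν,0})(1−δ_{μ,0})(1−δ_{ν,m})(1−δ_{μ,m})·D_n(ν, n−μ)·D_n(m−μ, n−m+ν). -/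
/-!
Both sides factor. Since `D_n(a, b)` vanishes for `a ≤ 0` and for `b ≥ n`, the Kronecker
factors only multiply terms that are already zero, so the right side is
`F(ν, μ) · F(m - μ, m - ν)` with `F(ν, μ) = D_n(ν + 1, n - 1 - μ) + D_n(ν, n - μ)`.
After clearing the common factor `n (n + ν - μ)`, the identity
`F(ν, μ) = C(n + ν - 1, ν) C(n, μ)` comes down to `(n + ν)(n - μ) + ν μ = n (n + ν - μ)`.
-/

/-- `Dn n a b` is the paper's `D_n(a,b)`, i.e. with `a = α+1`:
`D_n(α+1,β) = (n/(α+β+1))·C(n+α,α)·C(n−1,β)` if `α ≥ 0` and `0 ≤ β ≤ n−1`, and `0` otherwise. -/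
def Dn (n : ℕ) (a b : ℤ) : ℚ :=
  if 1 ≤ a ∧ 0 ≤ b ∧ b ≤ (n : ℤ) - 1 then
    (n : ℚ) / ((a : ℚ) + (b : ℚ)) *
      ((((n : ℤ) + (a - 1)).toNat.choose (a - 1).toNat : ℚ)) *
      ((((n : ℤ) - 1).toNat.choose b.toNat : ℚ))
  else 0

theorem Nat.mul_add_choose_eq (n ν : ℕ) :
    n * (n + ν).choose ν = (n + ν) * (n + ν - 1).choose ν := by
  rcases Nat.eq_zero_or_pos (n + ν) with h | h
  · simp [show n = 0 ∧ ν = 0 by omega]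
  · have := Nat.choose_mul_succ_eq (n + ν - 1) ν
    rw [Nat.sub_add_cancel h, Nat.add_sub_cancel] at this
    linarith

theorem Nat.mul_choose_sub_one_eq (n μ : ℕ) :
    n * (n - 1).choose μ = (n - μ) * n.choose μ := by
  rcases n with _ | n
  · simp
  · simpa [mul_comm] using Nat.choose_mul_succ_eq n μ

theorem Nat.mul_add_sub_one_choose_pred (n ν : ℕ) (hν : ν ≠ 0) :
    n * (n + ν - 1).choose (ν - 1) = ν * (n + ν - 1).choose ν := by
  obtain ⟨ν, rfl⟩ := Nat.exists_eq_add_one_of_ne_zero hν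
  have := Nat.choose_succ_right_eq (n + ν) ν
  rw [Nat.add_sub_cancel] at this
  simp only [Nat.add_sub_cancel, ← Nat.add_assoc]
  linarith

theorem Nat.mul_choose_pred_pred (n μ : ℕ) (hμ : μ ≠ 0) :
    n * (n - 1).choose (μ - 1) = μ * n.choose μ := by
  obtain ⟨μ, rfl⟩ := Nat.exists_eq_add_one_of_ne_zero hμ
  rcases n with _ | n
  · simp
  · simpa [mul_comm] using Nat.add_one_mul_choose_eq n μ

theorem Nat.cast_add_sub_ne_zero {K : Type*} [Field K] [LinearOrder K] [IsStrictOrderedRing K]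
    {n μ : ℕ} (ν : ℕ) (hμ : μ < n) : (n + ν - μ : K) ≠ 0 := by
  have : (μ : K) < n := by exact_mod_cast hμ
  linarith [(ν.cast_nonneg : (0 : K) ≤ ν)]

theorem Dn_eq_zero_of_nonpos {n : ℕ} {a : ℤ} (b : ℤ) (ha : a ≤ 0) : Dn n a b = 0 :=
  if_neg (by omega)

theorem Dn_eq_zero_of_le {n : ℕ} (a : ℤ) {b : ℤ} (hb : n ≤ b) : Dn n a b = 0 :=
  if_neg (by omega)

theorem mul_Dn_add_one (n ν μ : ℕ) (hμ : μ < n) :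
    (n * (n + ν - μ) : ℚ) * Dn n (ν + 1) (n - 1 - μ) =
      (n + ν) * (n - μ) * (n + ν - 1).choose ν * n.choose μ := by
  have hA := Nat.mul_add_choose_eq n ν
  have hY := Nat.mul_choose_sub_one_eq n μ
  rw [← Nat.choose_symm (by omega : μ ≤ n - 1)] at hY
  unfold Dn
  rw [if_pos (by omega)]
  simp only [add_sub_cancel_right, Int.toNat_natCast, show ((n : ℤ) + ν).toNat = n + ν by omega,
    show ((n : ℤ) - 1).toNat = n - 1 by omega,
    show ((n : ℤ) - 1 - μ).toNat = n - 1 - μ by omega]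
  have hpos : (n + ν - μ : ℚ) ≠ 0 := Nat.cast_add_sub_ne_zero ν hμ
  qify [hμ.le] at hA hY
  push_cast
  rw [show (ν : ℚ) + 1 + (n - 1 - μ) = n + ν - μ by ring]
  field_simp
  linear_combination (n * ((n - 1).choose (n - 1 - μ) : ℚ)) * hA
    + ((n + ν) * ((n + ν - 1).choose ν : ℚ)) * hY

theorem mul_Dn (n ν μ : ℕ) (hμ : μ < n) :
    (n * (n + ν - μ) : ℚ) * Dn n ν (n - μ) =
      ν * μ * (n + ν - 1).choose ν * n.choose μ := by
  rcases eq_or_ne ν 0 with rfl | hν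
  · simp [Dn_eq_zero_of_nonpos]
  rcases eq_or_ne μ 0 with rfl | hμ0
  · simp [Dn_eq_zero_of_le]
  have hX := Nat.mul_add_sub_one_choose_pred n ν hν
  have hY := Nat.mul_choose_pred_pred n μ hμ0
  rw [← Nat.choose_symm (by omega : μ - 1 ≤ n - 1)] at hY
  unfold Dn
  rw [if_pos (by omega)]
  simp only [show ((n : ℤ) + (ν - 1)).toNat = n + ν - 1 by omega,
    show ((ν : ℤ) - 1).toNat = ν - 1 by omega, show ((n : ℤ) - 1).toNat = n - 1 by omega,
    show ((n : ℤ) - μ).toNat = n - 1 - (μ - 1) by omega]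
  have hpos : (n + ν - μ : ℚ) ≠ 0 := Nat.cast_add_sub_ne_zero ν hμ
  qify at hX hY
  push_cast
  rw [show (ν : ℚ) + (n - μ) = n + ν - μ by ring]
  field_simp
  linear_combination (n * ((n - 1).choose (n - 1 - (μ - 1)) : ℚ)) * hX
    + (ν * ((n + ν - 1).choose ν : ℚ)) * hY

theorem Dn_add_one_add_Dn (n ν μ : ℕ) (hμ : μ < n) :
    Dn n (ν + 1) (n - 1 - μ) + Dn n ν (n - μ) = (n + ν - 1).choose ν * n.choose μ := by
  have hn : (n : ℚ) ≠ 0 := by exact_mod_cast hμ.ne_bot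
  have hpos : (n + ν - μ : ℚ) ≠ 0 := Nat.cast_add_sub_ne_zero ν hμ
  apply mul_left_cancel₀ (mul_ne_zero hn hpos)
  linear_combination mul_Dn_add_one n ν μ hμ + mul_Dn n ν μ hμ

theorem one_sub_ite_mul_one_sub_ite_mul {R : Type*} [Ring R] {p q : Prop} [Decidable p]
    [Decidable q] {x : R} (hp : p → x = 0) (hq : q → x = 0) :
    (1 - if p then 1 else 0) * (1 - if q then 1 else 0) * x = x := by
  by_cases p <;> by_cases q <;> simp_all

/-- For integers `n > m ≥ 1` and `0 ≤ ν, μ ≤ m`: `a(ν,μ,m,n) = b(ν,μ,m,n)`. -/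
theorem stmt11 : ∀ m n ν μ : ℕ, 1 ≤ m → m < n → ν ≤ m → μ ≤ m →
    (((n - 1 + ν).choose ν * n.choose (m - ν) *
        (n - 1 + m - μ).choose (m - μ) * n.choose μ : ℕ) : ℚ) =
      Dn n ((ν : ℤ) + 1) ((n : ℤ) - 1 - (μ : ℤ)) *
          Dn n ((m : ℤ) - (μ : ℤ) + 1) ((n : ℤ) - 1 - (m : ℤ) + (ν : ℤ))
      + (1 - (if ν = m then (1 : ℚ) else 0)) * (1 - (if μ = m then (1 : ℚ) else 0)) *
          Dn n ((ν : ℤ) + 1) ((n : ℤ) - 1 - (μ : ℤ)) *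
          Dn n ((m : ℤ) - (μ : ℤ)) ((n : ℤ) - (m : ℤ) + (ν : ℤ))
      + (1 - (if ν = 0 then (1 : ℚ) else 0)) * (1 - (if μ = 0 then (1 : ℚ) else 0)) *
          Dn n (ν : ℤ) ((n : ℤ) - (μ : ℤ)) *
          Dn n ((m : ℤ) - (μ : ℤ) + 1) ((n : ℤ) - 1 - (m : ℤ) + (ν : ℤ))
      + (1 - (if ν = 0 then (1 : ℚ) else 0)) * (1 - (if μ = 0 then (1 : ℚ) else 0)) *
          (1 - (if ν = m then (1 : ℚ) else 0)) * (1 - (if μ = m then (1 : ℚ) else 0)) *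
          Dn n (ν : ℤ) ((n : ℤ) - (μ : ℤ)) *
          Dn n ((m : ℤ) - (μ : ℤ)) ((n : ℤ) - (m : ℤ) + (ν : ℤ)) := by
  intro m n ν μ _ hmn hν hμ
  rw [show (m : ℤ) - μ = (m - μ : ℕ) by omega,
    show (n : ℤ) - 1 - m + ν = n - 1 - (m - ν : ℕ) by omega,
    show (n : ℤ) - m + ν = n - (m - ν : ℕ) by omega]
  set A := Dn n (ν + 1) (n - 1 - μ)
  set B := Dn n ν (n - μ)
  set A' := Dn n ((m - μ : ℕ) + 1) (n - 1 - (m - ν : ℕ))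
  set B' := Dn n (m - μ : ℕ) (n - (m - ν : ℕ))
  have hB : (1 - if ν = 0 then 1 else 0) * (1 - if μ = 0 then 1 else 0) * B = B :=
    one_sub_ite_mul_one_sub_ite_mul (fun h ↦ Dn_eq_zero_of_nonpos _ (by simp [h]))
      (fun h ↦ Dn_eq_zero_of_le _ (by simp [h]))
  have hB' : (1 - if ν = m then 1 else 0) * (1 - if μ = m then 1 else 0) * B' = B' :=
    one_sub_ite_mul_one_sub_ite_mul (fun h ↦ Dn_eq_zero_of_le _ (by simp [h]))
      (fun h ↦ Dn_eq_zero_of_nonpos _ (by simp [h]))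
  calc _ = (A + B) * (A' + B') := by
        rw [Dn_add_one_add_Dn n ν μ (by omega), Dn_add_one_add_Dn n (m - μ) (m - ν) (by omega),
          show n - 1 + ν = n + ν - 1 by omega, show n - 1 + m - μ = n + (m - μ) - 1 by omega]
        push_cast
        ring
    _ = (A + (1 - if ν = 0 then 1 else 0) * (1 - if μ = 0 then 1 else 0) * B) *
        (A' + (1 - if ν = m then 1 else 0) * (1 - if μ = m then 1 else 0) * B') := by
      rw [hB, hB']
    _ = _ := by ring
end

section
/- Let f ∈ ℚ[x] be a polynomial of degree n ≥ 0. Define F_0 = 0 and F_{k+1} = f(k) − F_k for k ≥ 0. Let G(x) = ∑_{j=0}^n F_j · ∏_{k=0, k≠j}^n (x−k)/(j−k) be the Lagrange interpolation polynomial of the values F_0,…,F_n, let B_n(x) = ∑_{j=0}^n (−1)^j · ∏_{k=0, k≠j}^n (x−k)/(j−k) be the polynomial of degree ≤ n interpolating (−1)^j at j = 0,…,n, and set c = 2^{−(n+1)} · ∑_{k=0}^n (−1)^k f(k) · ∑_{j=k+1}^{n+1} C(n+1,j). Then the polynomial F(x) = G(x) + c·B_n(x) satisfies F(x+1) + F(x)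 = f(x) as an identity of polynomials; i.e., F is the (unique) polynomial preimage of f under the summation operator S̃F(x) = F(x+1)+F(x). -/
open Polynomial Finset

set_option maxHeartbeats 1000000


lemma myLCcomp (P : Polynomial ℚ) : (P.comp (X + 1)).leadingCoeff = P.leadingCoeff := by
  have h1 : (X + 1 : ℚ[X]) = X + C 1 := by simp
  have hm : (X + C (1:ℚ)).leadingCoeff = 1 := (monic_X_add_C (1:ℚ)).leadingCoeff
  have hnd : (X + C (1:ℚ)).natDegree ≠ 0 := by rw [natDegree_X_add_C]; norm_num
  rw [h1, leadingCoeff_comp hnd, hm, one_pow, mul_one]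

lemma myDegComp (P : Polynomial ℚ) : (P.comp (X + 1)).degree = P.degree := by
  rcases eq_or_ne P 0 with rfl | hP
  · simp
  · have hne : P.comp (X + 1) ≠ 0 := by
      intro h
      have hlc := myLCcomp P
      rw [h, leadingCoeff_zero] at hlc
      exact hP (leadingCoeff_eq_zero.mp hlc.symm)
    have h1 : (X + 1 : ℚ[X]) = X + C 1 := by simp
    rw [degree_eq_natDegree hne, degree_eq_natDegree hP, h1, natDegree_comp,
      natDegree_X_add_C, mul_one]

lemma myDiffDeg (P : Polynomial ℚ) {m : ℕ} (h : P.degree < ((m:ℕ) : WithBot ℕ) + 1) :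
    (P.comp (X + 1) - P).degree < (m : WithBot ℕ) := by
  rcases eq_or_ne P 0 with rfl | hP
  · simp only [zero_comp, sub_zero, degree_zero]
    exact WithBot.bot_lt_coe m
  rcases eq_or_ne P.natDegree 0 with h0 | h0
  · obtain ⟨a, rfl⟩ := natDegree_eq_zero.mp h0
    simp only [C_comp, sub_self, degree_zero]
    exact WithBot.bot_lt_coe m
  · have hd : (P.comp (X+1)).degree = P.degree := myDegComp P
    have hlt : (P.comp (X+1) - P).degree < P.degree := by
      have := degree_sub_lt hd (by
        intro hcc
        rw [hcc, degree_zero] at hd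
        exact hP (degree_eq_bot.mp hd.symm)) (myLCcomp P)
      rwa [hd] at this
    have hPle : P.degree ≤ (m : WithBot ℕ) := by
      have h2 : P.natDegree < m + 1 := by
        rw [natDegree_lt_iff_degree_lt hP]
        exact_mod_cast h
      exact degree_le_of_natDegree_le (Nat.lt_succ_iff.mp h2)
    exact lt_of_lt_of_le hlt hPle

lemma myFD (m : ℕ) : ∀ (P : Polynomial ℚ), P.degree < (m : WithBot ℕ) → ∀ x : ℚ,
    ∑ k ∈ range (m+1), (-1:ℚ)^k * (m.choose k : ℚ) * P.eval (x + k) = 0 := by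
  induction m with
  | zero =>
    intro P hP x
    have hP0 : P = 0 := by
      rw [← degree_eq_bot]
      exact Nat.WithBot.lt_zero_iff.mp (by simpa using hP)
    simp [hP0]
  | succ m ih =>
    intro P hP x
    have hQdeg : (P.comp (X + 1) - P).degree < (m : WithBot ℕ) := by
      apply myDiffDeg
      simpa [Nat.cast_add, Nat.cast_one] using hP
    set A := ∑ k ∈ range (m+1), (-1:ℚ)^k * (m.choose k : ℚ) * P.eval (x + k) with hA
    set B := ∑ k ∈ range (m+1), (-1:ℚ)^k * (m.choose k : ℚ) * P.eval (x + k + 1) with hB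
    have hBA : ∑ k ∈ range (m+1), (-1:ℚ)^k * (m.choose k : ℚ) *
        (P.eval (x + k + 1) - P.eval (x + k)) = 0 := by
      rw [← ih _ hQdeg x]
      refine Finset.sum_congr rfl fun k _ => ?_
      simp only [eval_sub, eval_comp, eval_add, eval_X, eval_one]
    have hBA' : B = A := by
      have h2 : B - A = 0 := by
        rw [hB, hA, ← Finset.sum_sub_distrib, ← hBA]
        exact Finset.sum_congr rfl fun k _ => by ring
      linarith
    rw [Finset.sum_range_succ']
    have hsplit : ∀ i ∈ range (m+1),
        (-1:ℚ)^(i+1) * (((m+1).choose (i+1) : ℕ):ℚ) * P.eval (x + ((i+1:ℕ):ℚ))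
        = -((-1:ℚ)^i * (m.choose i : ℚ) * P.eval (x + i + 1))
          + (-1:ℚ)^(i+1) * (m.choose (i+1) : ℚ) * P.eval (x + ((i+1:ℕ):ℚ)) := by
      intro i _
      have hc : (((m+1).choose (i+1) : ℕ):ℚ) = (m.choose i : ℚ) + (m.choose (i+1) : ℚ) := by
        rw [Nat.choose_succ_succ]; push_cast; ring
      rw [hc]; push_cast; ring
    rw [Finset.sum_congr rfl hsplit, Finset.sum_add_distrib, Finset.sum_neg_distrib]
    set S2 := ∑ i ∈ range (m+1), (-1:ℚ)^(i+1) * (m.choose (i+1) : ℚ) * P.eval (x + ((i+1:ℕ):ℚ)) with hS2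
    have hA2 : ∑ k ∈ range (m+2), (-1:ℚ)^k * (m.choose k : ℚ) * P.eval (x + (k:ℚ)) = A := by
      rw [Finset.sum_range_succ, ← hA]
      simp [Nat.choose_succ_self]
    have hA3 : ∑ k ∈ range (m+2), (-1:ℚ)^k * (m.choose k : ℚ) * P.eval (x + (k:ℚ))
        = S2 + (-1:ℚ)^0 * (m.choose 0 : ℚ) * P.eval (x + ((0:ℕ):ℚ)) := by
      rw [Finset.sum_range_succ']
    have hS2' : S2 = A - P.eval x := by
      rw [hA2] at hA3
      simp only [pow_zero, Nat.choose_zero_right, Nat.cast_one, Nat.cast_zero, add_zero,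
        one_mul] at hA3
      linarith
    have hf0 : (-1:ℚ)^0 * (((m+1).choose 0 : ℕ):ℚ) * P.eval (x + ((0:ℕ):ℚ)) = P.eval x := by
      simp
    rw [hf0, hS2', ← hB]
    linarith [hBA']

/-- Euler summation: for a polynomial `f` of degree `n`, with `F₀ = 0`, `F_{k+1} = f(k) − F_k`,
`G` the Lagrange interpolation polynomial of `F₀,…,F_n`, `B` the polynomial of degree `≤ n`
interpolating `(−1)^j` at `j = 0,…,n`, and
`c = 2^{−(n+1)}·∑_{k=0}^n (−1)^k f(k)·∑_{j=k+1}^{n+1} C(n+1,j)`, the polynomial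
`F = G + c·B` satisfies `F(x+1) + F(x) = f(x)`. -/
theorem stmt12 (f : Polynomial ℚ) (n : ℕ) (hf : f.degree = (n : ℕ))
    (Fseq : ℕ → ℚ) (hF0 : Fseq 0 = 0)
    (hFrec : ∀ k : ℕ, Fseq (k + 1) = f.eval (k : ℚ) - Fseq k)
    (G B F : Polynomial ℚ) (c : ℚ)
    (hG : G = ∑ j ∈ Finset.range (n + 1), Polynomial.C (Fseq j) *
      ∏ k ∈ (Finset.range (n + 1)).erase j,
        Polynomial.C (((j : ℚ) - (k : ℚ))⁻¹) * (Polynomial.X - Polynomial.C (k : ℚ)))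
    (hB : B = ∑ j ∈ Finset.range (n + 1), Polynomial.C ((-1 : ℚ) ^ j) *
      ∏ k ∈ (Finset.range (n + 1)).erase j,
        Polynomial.C (((j : ℚ) - (k : ℚ))⁻¹) * (Polynomial.X - Polynomial.C (k : ℚ)))
    (hc : c = (1 / 2 ^ (n + 1)) * ∑ k ∈ Finset.range (n + 1),
      (-1 : ℚ) ^ k * f.eval (k : ℚ) *
        ∑ j ∈ Finset.Icc (k + 1) (n + 1), ((n + 1).choose j : ℚ))
    (hFdef : F = G + Polynomial.C c * B) :
    F.comp (Polynomial.X + 1) + F = f := by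
  classical
  have hinj : Set.InjOn (fun i : ℕ => (i:ℚ)) (range (n+1)) := fun a _ b _ h => Nat.cast_injective h
  have hG' : G = Lagrange.interpolate (range (n+1)) (fun i : ℕ => (i:ℚ)) (fun i => Fseq i) := by
    rw [hG, Lagrange.interpolate_apply]
    simp only [Lagrange.basis, Lagrange.basisDivisor]
  have hB' : B = Lagrange.interpolate (range (n+1)) (fun i : ℕ => (i:ℚ)) (fun i => (-1:ℚ)^i) := by
    rw [hB, Lagrange.interpolate_apply]
    simp only [Lagrange.basis, Lagrange.basisDivisor]
  have hGdeg : G.degree < (((n+1:ℕ)) : WithBot ℕ) := by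
    rw [hG']
    simpa using Lagrange.degree_interpolate_lt _ hinj
  have hBdeg : B.degree < (((n+1:ℕ)) : WithBot ℕ) := by
    rw [hB']
    have := Lagrange.degree_interpolate_lt (s := range (n+1)) (v := fun i : ℕ => (i:ℚ))
      (fun i => (-1:ℚ)^i) hinj
    simpa using this
  have hFdeg : F.degree < (((n+1:ℕ)) : WithBot ℕ) := by
    rw [hFdef]
    refine lt_of_le_of_lt (degree_add_le _ _) (max_lt hGdeg ?_)
    refine lt_of_le_of_lt ?_ hBdeg
    rw [← smul_eq_C_mul]
    exact degree_smul_le _ _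
  have hFeval : ∀ j ∈ range (n+1), F.eval (j:ℚ) = Fseq j + c * (-1:ℚ)^j := by
    intro j hj
    rw [hFdef, eval_add, eval_mul, eval_C, hG', hB']
    rw [show (j:ℚ) = (fun i : ℕ => (i:ℚ)) j from rfl, Lagrange.eval_interpolate_at_node _ hinj hj,
      Lagrange.eval_interpolate_at_node _ hinj hj]
  -- closed form of Fseq
  set T : ℕ → ℚ := fun m => ∑ i ∈ range m, (-1:ℚ)^i * f.eval (i:ℚ) with hT
  have hFseqT : ∀ k, Fseq k = (-1:ℚ)^(k+1) * T k := by
    intro k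
    induction k with
    | zero => simp [hF0, hT]
    | succ k ih =>
      rw [hFrec k, ih, hT]
      simp only [Finset.sum_range_succ]
      push_cast
      have hsq : (-1:ℚ)^k * (-1:ℚ)^k = 1 := by rw [← mul_pow]; norm_num
      linear_combination (-(f.eval (k:ℚ))) * hsq
  -- master finite-difference identity for F
  have hmaster : ∑ k ∈ range (n+2), (-1:ℚ)^k * ((n+1).choose k : ℚ) * F.eval (k:ℚ) = 0 := by
    have h := myFD (n+1) F (by exact_mod_cast hFdeg) 0
    rw [← h]
    exact Finset.sum_congr rfl fun k _ => by rw [zero_add]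
  -- binomial sums
  have hcs : ∑ k ∈ range (n+2), ((n+1).choose k : ℚ) = 2^(n+1) := by
    exact_mod_cast Nat.sum_range_choose (n+1)
  have hcs1 : ∑ k ∈ range (n+1), ((n+1).choose k : ℚ) = 2^(n+1) - 1 := by
    rw [Finset.sum_range_succ] at hcs
    simp only [Nat.choose_self, Nat.cast_one] at hcs
    linarith
  -- exchange of summation
  have hU : ∑ j ∈ range (n+2), ((n+1).choose j : ℚ) * T j
      = ∑ k ∈ range (n+1), (-1:ℚ)^k * f.eval (k:ℚ) *
          ∑ j ∈ Finset.Icc (k+1) (n+1), ((n+1).choose j : ℚ) := by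
    have step1 : ∀ j ∈ range (n+2), ((n+1).choose j : ℚ) * T j
        = ∑ i ∈ range (n+2),
            (if i < j then ((n+1).choose j : ℚ) * ((-1:ℚ)^i * f.eval (i:ℚ)) else 0) := by
      intro j hj
      have hj' : j < n+2 := mem_range.mp hj
      have hfil : (range (n+2)).filter (fun i => i < j) = range j := by
        ext a
        simp only [mem_filter, mem_range]
        omega
      rw [hT, Finset.mul_sum, ← Finset.sum_filter, hfil]
    rw [Finset.sum_congr rfl step1, Finset.sum_comm]
    have step2 : ∀ i ∈ range (n+2),
        (∑ j ∈ range (n+2),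
          if i < j then ((n+1).choose j : ℚ) * ((-1:ℚ)^i * f.eval (i:ℚ)) else 0)
        = (-1:ℚ)^i * f.eval (i:ℚ) * ∑ j ∈ Finset.Icc (i+1) (n+1), ((n+1).choose j : ℚ) := by
      intro i hi
      have hfil : (range (n+2)).filter (fun j => i < j) = Finset.Icc (i+1) (n+1) := by
        ext a
        simp only [mem_filter, mem_range, Finset.mem_Icc]
        omega
      rw [← Finset.sum_filter, hfil, Finset.mul_sum]
      exact Finset.sum_congr rfl fun j _ => by ring
    rw [Finset.sum_congr rfl step2, Finset.sum_range_succ]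
    rw [show Finset.Icc (n+1+1) (n+1) = ∅ from Finset.Icc_eq_empty (by omega)]
    simp
  have h2ne : (2:ℚ)^(n+1) ≠ 0 := by positivity
  have hcU : ∑ j ∈ range (n+2), ((n+1).choose j : ℚ) * T j = c * 2^(n+1) := by
    rw [hU, hc]
    field_simp
  have hcU' : (∑ j ∈ range (n+1), ((n+1).choose j : ℚ) * T j) + T (n+1) = c * 2^(n+1) := by
    conv_rhs => rw [← hcU, Finset.sum_range_succ]
    rw [Nat.choose_self, Nat.cast_one, one_mul]
  -- rewrite the master identity
  have hS : ∑ k ∈ range (n+1), (-1:ℚ)^k * ((n+1).choose k : ℚ) * F.eval (k:ℚ)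
      = ∑ k ∈ range (n+1), (-(((n+1).choose k : ℚ) * T k) + c * ((n+1).choose k : ℚ)) := by
    refine Finset.sum_congr rfl fun k hk => ?_
    rw [hFeval k hk, hFseqT k, pow_succ]
    have hsq : (-1:ℚ)^k * (-1:ℚ)^k = 1 := by rw [← mul_pow]; norm_num
    linear_combination (c * ((n+1).choose k : ℚ) - ((n+1).choose k : ℚ) * T k) * hsq
  rw [Finset.sum_range_succ, hS, Finset.sum_add_distrib, Finset.sum_neg_distrib,
    ← Finset.mul_sum, hcs1] at hmaster
  simp only [Nat.choose_self, Nat.cast_one, mul_one] at hmaster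
  -- hmaster : -U1 + c * (2^(n+1) - 1) + (-1)^(n+1) * F.eval ↑(n+1) = 0
  have hS_eq : -(∑ k ∈ range (n+1), ((n+1).choose k : ℚ) * T k) + c * (2^(n+1) - 1)
      = T (n+1) - c := by linear_combination -hcU'
  have hsq1 : (-1:ℚ)^(n+1) * (-1:ℚ)^(n+1) = 1 := by rw [← mul_pow]; norm_num
  have hW : F.eval (((n+1:ℕ)):ℚ) = -((-1:ℚ)^(n+1)) * (T (n+1) - c) := by
    linear_combination ((-1:ℚ)^(n+1)) * hmaster
      - ((-1:ℚ)^(n+1)) * hS_eq - (F.eval (((n+1:ℕ)):ℚ)) * hsq1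
  -- conclude by comparing evaluations at 0, …, n
  refine Polynomial.eq_of_degrees_lt_of_eval_index_eq (range (n+1)) hinj ?_ ?_ ?_
  · rw [card_range]
    refine lt_of_le_of_lt (degree_add_le _ _) (max_lt ?_ ?_)
    · rw [myDegComp]
      exact_mod_cast hFdeg
    · exact_mod_cast hFdeg
  · rw [card_range, hf]
    exact_mod_cast Nat.lt_succ_self n
  · intro i hi
    rw [eval_add, eval_comp, eval_add, eval_X, eval_one]
    have hi' : i < n+1 := mem_range.mp hi
    have h1 : ((i:ℚ) + 1) = ((i+1 : ℕ) : ℚ) := by push_cast; ring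
    rcases lt_or_eq_of_le (Nat.lt_succ_iff.mp hi') with hlt | heq
    · rw [h1, hFeval (i+1) (mem_range.mpr (by omega)), hFeval i hi, hFrec i, pow_succ]
      ring
    · subst heq
      rw [h1, hFeval i hi, hW, hFseqT i, pow_succ,
        show T (i+1) = T i + (-1:ℚ)^i * f.eval (i:ℚ) from by rw [hT]; exact Finset.sum_range_succ _ _]
      have hsqn : (-1:ℚ)^i * (-1:ℚ)^i = 1 := by rw [← mul_pow]; norm_num
      linear_combination (f.eval (i:ℚ)) * hsqn
end

section
/- For every integer n ≥ 1, the polynomial F(x) = (1/2)·∑_{j=0}^{n} (−1)^j · ∏_{k=0, k≠j}^{2n} (x−k)/(j−k) + (1/2)·∑_{j=n+1}^{2n} (−1)^{j+1} · ∏_{k=0, k≠j}^{2n} (x−k)/(j−k) satisfies F(x+1) + F(x) = [x choose n]·[x−n−1 choose n] as an identity of polynomials. -/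
/-!
`F` is the Lagrange interpolant at the nodes `0, …, 2n` of the values `±(-1)^j / 2`, with sign `+`
for `j ≤ n` and `-` for `j > n`. Hence `F(j+1) + F(j)` vanishes for `j < 2n`, except at `j = n`
where it is `(-1)^n`; the right-hand side takes the same values there, because `[x choose n]`
vanishes at `0, …, n-1` and equals `1` at `n` and `(-1)^n` at `-1`. Both sides have degree at most
`2n`, and their coefficients of `x^(2n)` agree: for `F` it is `½ ∑ ±1 / (j! (2n-j)!)`, which the
symmetry `j ↦ 2n - j` collapses to `1 / (2 n!²)`. So their difference has degree `< 2n` and `2n`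
roots.
-/

open Polynomial Finset Nat

namespace Polynomial

theorem coeff_taylor_of_natDegree_le {R : Type*} [Semiring R] (r : R) {p : R[X]} {d : ℕ}
    (h : p.natDegree ≤ d) : (taylor r p).coeff d = p.coeff d := by
  rcases h.lt_or_eq with h | rfl
  · rw [coeff_eq_zero_of_natDegree_lt h,
      coeff_eq_zero_of_natDegree_lt (by rwa [natDegree_taylor])]
  · exact coeff_taylor_natDegree (r := r) (f := p)

theorem eq_of_natDegree_le_of_coeff_eq_of_eval_index_eq {R ι : Type*} [CommRing R] [IsDomain R]
    {p q : R[X]} (s : Finset ι) {v : ι → R} (hvs : Set.InjOn v s) (hp : p.natDegree ≤ #s)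
    (hq : q.natDegree ≤ #s) (hcoeff : p.coeff #s = q.coeff #s)
    (heval : ∀ i ∈ s, p.eval (v i) = q.eval (v i)) : p = q := by
  refine eq_of_degree_sub_lt_of_eval_index_eq s hvs ?_ heval
  rw [degree_lt_iff_coeff_zero]
  intro m hm
  rw [coeff_sub, sub_eq_zero]
  rcases hm.lt_or_eq with hm | rfl
  · rw [coeff_eq_zero_of_natDegree_lt (hp.trans_lt hm),
      coeff_eq_zero_of_natDegree_lt (hq.trans_lt hm)]
  · exact hcoeff

end Polynomial

theorem descPochhammer_eval_neg_one {R : Type*} [CommRing R] (n : ℕ) :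
    (descPochhammer R n).eval (-1) = (-1) ^ n * n ! := by
  have h : ∀ i ∈ range n, (-1 : R) - i = -1 * ((i + 1 : ℕ) : R) := fun i _ => by push_cast; ring
  rw [descPochhammer_eval_eq_prod_range, prod_congr rfl h, prod_mul_distrib, prod_const,
    card_range, ← Nat.cast_prod, prod_range_add_one_eq_factorial]

theorem descPochhammer_eval_self {R : Type*} [CommRing R] (n : ℕ) :
    (descPochhammer R n).eval (n : R) = n ! := by
  rw [descPochhammer_eval_eq_descFactorial, descFactorial_self]

theorem Lagrange.coeff_interpolate_card_sub_one {F ι : Type*} [Field F] [DecidableEq ι]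
    {s : Finset ι} {v : ι → F} (hvs : Set.InjOn v s) (r : ι → F) :
    (Lagrange.interpolate s v r).coeff (#s - 1) = ∑ i ∈ s, r i / ∏ j ∈ s.erase i, (v i - v j) := by
  rw [Lagrange.coeff_eq_sum hvs (Lagrange.degree_interpolate_lt r hvs)]
  exact sum_congr rfl fun i hi => by rw [Lagrange.eval_interpolate_at_node r hvs hi]

theorem prod_erase_range_natCast_sub {R : Type*} [CommRing R] {m j : ℕ} (hj : j ≤ m) :
    ∏ k ∈ (range (m + 1)).erase j, ((j : R) - k) = (-1) ^ (m - j) * j ! * (m - j)! := by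
  have hsplit :
      (range (m + 1)).erase j = range j ∪ (range (m - j)).map (addLeftEmbedding (j + 1)) := by
    ext k
    simp only [mem_erase, mem_range, mem_union, mem_map, addLeftEmbedding_apply]
    constructor
    · intro h
      by_cases hk : k < j
      · exact Or.inl hk
      · exact Or.inr ⟨k - (j + 1), by omega, by omega⟩
    · rintro (h | ⟨i, hi, rfl⟩) <;> omega
  have hshift : ∀ i ∈ range (m - j), (j : R) - ((addLeftEmbedding (j + 1) i : ℕ) : R) = -1 - i :=
    fun i _ => by simp only [addLeftEmbedding_apply]; push_cast; ring
  rw [hsplit, prod_union (disjoint_left.mpr fun k hk hk' => by simp at hk hk'; omega), prod_map,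
    prod_congr rfl hshift, ← descPochhammer_eval_eq_prod_range,
    ← descPochhammer_eval_eq_prod_range, descPochhammer_eval_self, descPochhammer_eval_neg_one]
  ring

theorem binomPoly_eq_C_mul_descPochhammer (n : ℕ) :
    binomPoly n = C (n ! : ℚ)⁻¹ * descPochhammer ℚ n := by
  rw [binomPoly]
  congr 1
  refine Polynomial.funext fun x => ?_
  simp only [eval_prod, eval_sub, eval_X, eval_C, descPochhammer_eval_eq_prod_range]

theorem eval_binomPoly (n : ℕ) (x : ℚ) :
    (binomPoly n).eval x = (descPochhammer ℚ n).eval x / n ! := by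
  rw [binomPoly_eq_C_mul_descPochhammer, eval_mul, eval_C, inv_mul_eq_div]

theorem eval_natCast_binomPoly (a n : ℕ) : (binomPoly n).eval (a : ℚ) = a.choose n := by
  rw [eval_binomPoly, Nat.cast_choose_eq_descPochhammer_div]

theorem eval_neg_one_binomPoly (n : ℕ) : (binomPoly n).eval (-1) = (-1) ^ n := by
  rw [eval_binomPoly, descPochhammer_eval_neg_one, mul_div_cancel_right₀ _ (by positivity)]

theorem natDegree_binomPoly (n : ℕ) : (binomPoly n).natDegree = n := by
  rw [binomPoly_eq_C_mul_descPochhammer, natDegree_C_mul (by positivity),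
    descPochhammer_natDegree]

theorem coeff_binomPoly_self (n : ℕ) : (binomPoly n).coeff n = (n ! : ℚ)⁻¹ := by
  have hmonic := (monic_descPochhammer ℚ n).coeff_natDegree
  rw [descPochhammer_natDegree] at hmonic
  rw [binomPoly_eq_C_mul_descPochhammer, coeff_C_mul, hmonic, mul_one]

theorem binomPoly_comp_X_sub_C_eq_taylor (n : ℕ) (a : ℚ) :
    (binomPoly n).comp (X - C a) = taylor (-a) (binomPoly n) := by
  rw [taylor_apply, C_neg, ← sub_eq_add_neg]

theorem natDegree_binomPoly_mul_comp_le (n : ℕ) (a : ℚ) :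
    (binomPoly n * (binomPoly n).comp (X - C a)).natDegree ≤ 2 * n := by
  rw [binomPoly_comp_X_sub_C_eq_taylor, two_mul]
  exact natDegree_mul_le_of_le (natDegree_binomPoly n).le
    (by rw [natDegree_taylor, natDegree_binomPoly])

theorem coeff_binomPoly_mul_comp (n : ℕ) (a : ℚ) :
    (binomPoly n * (binomPoly n).comp (X - C a)).coeff (2 * n) = ((n ! : ℚ) * n !)⁻¹ := by
  have hdeg := (natDegree_binomPoly n).le
  rw [binomPoly_comp_X_sub_C_eq_taylor, two_mul, coeff_mul_add_eq_of_natDegree_le hdeg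
    (by rwa [natDegree_taylor]), coeff_taylor_of_natDegree_le _ hdeg, coeff_binomPoly_self,
    mul_inv]

theorem eval_binomPoly_mul_comp {n j : ℕ} (hj : j < 2 * n) :
    (binomPoly n * (binomPoly n).comp (X - C ((n : ℚ) + 1))).eval (j : ℚ) =
      if j = n then (-1) ^ n else 0 := by
  rw [eval_mul, eval_comp, eval_sub, eval_X, eval_C, eval_natCast_binomPoly]
  rcases lt_trichotomy j n with h | rfl | h
  · rw [if_neg h.ne, choose_eq_zero_of_lt h, Nat.cast_zero, zero_mul]
  · rw [if_pos rfl, choose_self, Nat.cast_one, one_mul, sub_add_cancel_left,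
      eval_neg_one_binomPoly]
  · have hcast : (j : ℚ) - (n + 1) = ((j - n - 1 : ℕ) : ℚ) := by
      rw [Nat.cast_sub (by omega), Nat.cast_sub h.le]; push_cast; ring
    rw [if_neg h.ne', hcast, eval_natCast_binomPoly,
      choose_eq_zero_of_lt (by omega : j - n - 1 < n), Nat.cast_zero, mul_zero]

def nodeSign (n j : ℕ) : ℚ := if j ≤ n then 1 else -1

noncomputable def signInterpolant (n : ℕ) : ℚ[X] :=
  Lagrange.interpolate (range (2 * n + 1)) Nat.cast fun j => nodeSign n j * (-1) ^ j / 2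

theorem lagrange_half_sums_eq_signInterpolant (n : ℕ) :
    C (1 / 2 : ℚ) *
          (∑ j ∈ range (n + 1), C ((-1 : ℚ) ^ j) *
            ∏ k ∈ (range (2 * n + 1)).erase j, C (((j : ℚ) - (k : ℚ))⁻¹) * (X - C (k : ℚ))) +
        C (1 / 2 : ℚ) *
          (∑ j ∈ Icc (n + 1) (2 * n), C ((-1 : ℚ) ^ (j + 1)) *
            ∏ k ∈ (range (2 * n + 1)).erase j, C (((j : ℚ) - (k : ℚ))⁻¹) * (X - C (k : ℚ))) =
      signInterpolant n := by
  rw [signInterpolant, Lagrange.interpolate_apply, ← Ico_add_one_right_eq_Icc,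
    ← sum_range_add_sum_Ico _ (by omega : n + 1 ≤ 2 * n + 1), mul_sum, mul_sum]
  refine congrArg₂ (· + ·) (sum_congr rfl fun j hj => ?_) (sum_congr rfl fun j hj => ?_) <;>
    simp only [mem_range, mem_Ico] at hj <;>
    rw [← mul_assoc, ← C_mul, nodeSign]
  · rw [if_pos (by omega)]
    congr 2
    ring
  · rw [if_neg (by omega)]
    congr 2
    ring

theorem natDegree_signInterpolant_le (n : ℕ) : (signInterpolant n).natDegree ≤ 2 * n := by
  have h := Lagrange.degree_interpolate_lt (fun j => nodeSign n j * (-1) ^ j / 2)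
    (Nat.cast_injective.injOn (s := (range (2 * n + 1) : Set ℕ)))
  rw [card_range] at h
  exact natDegree_le_iff_coeff_eq_zero.mpr fun m hm =>
    (degree_lt_iff_coeff_zero _ _).mp h m (by exact_mod_cast hm)

theorem sum_nodeSign_div_factorial_mul_factorial (n : ℕ) :
    ∑ j ∈ range (2 * n + 1), nodeSign n j / (j ! * (2 * n - j)! : ℚ) = ((n ! : ℚ) * n !)⁻¹ := by
  set f : ℕ → ℚ := fun j => nodeSign n j / (j ! * (2 * n - j)!) with hf
  have hpair : ∀ j ∈ range (2 * n + 1),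
      f j + f (2 * n + 1 - 1 - j) = if j = n then 2 * ((n ! : ℚ) * n !)⁻¹ else 0 := by
    intro j hj
    rw [mem_range] at hj
    rw [show 2 * n + 1 - 1 - j = 2 * n - j by omega]
    simp only [hf, nodeSign, show 2 * n - (2 * n - j) = j by omega]
    rcases lt_trichotomy j n with h | rfl | h
    · rw [if_pos h.le, if_neg (by omega), if_neg h.ne]; ring
    · rw [if_pos le_rfl, if_pos (by omega), if_pos rfl, show 2 * j - j = j by omega]; ring
    · rw [if_neg (by omega), if_pos (by omega), if_neg h.ne']; ring
  calc ∑ j ∈ range (2 * n + 1), f j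
      = (∑ j ∈ range (2 * n + 1), (f j + f (2 * n + 1 - 1 - j))) / 2 := by
        rw [sum_add_distrib, sum_range_reflect]; ring
    _ = ((n ! : ℚ) * n !)⁻¹ := by
        rw [sum_congr rfl hpair, sum_ite_eq' _ _ (fun _ => _), if_pos (by simp; omega)]; ring

theorem coeff_signInterpolant (n : ℕ) :
    (signInterpolant n).coeff (2 * n) = ((n ! : ℚ) * n !)⁻¹ / 2 := by
  have h := Lagrange.coeff_interpolate_card_sub_one
    (Nat.cast_injective.injOn (s := (range (2 * n + 1) : Set ℕ)))
    (fun j => nodeSign n j * (-1) ^ j / 2)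
  rw [card_range, add_tsub_cancel_right] at h
  rw [signInterpolant, h, ← sum_nodeSign_div_factorial_mul_factorial, sum_div]
  refine sum_congr rfl fun j hj => ?_
  have hj : j ≤ 2 * n := by rw [mem_range] at hj; omega
  have hsign : (-1 : ℚ) ^ (2 * n - j) = (-1) ^ j := by
    rw [neg_one_pow_eq_pow_mod_two, neg_one_pow_eq_pow_mod_two (n := j),
      show (2 * n - j) % 2 = j % 2 by omega]
  rw [prod_erase_range_natCast_sub hj, hsign]
  field_simp

theorem eval_signInterpolant_add_one_add {n j : ℕ} (hj : j < 2 * n) :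
    (signInterpolant n).eval ((j : ℚ) + 1) + (signInterpolant n).eval (j : ℚ) =
      if j = n then (-1) ^ n else 0 := by
  have hinj := Nat.cast_injective.injOn (s := (range (2 * n + 1) : Set ℕ)) (β := ℚ)
  rw [signInterpolant, ← Nat.cast_succ,
    Lagrange.eval_interpolate_at_node _ hinj (mem_range.mpr (by omega)),
    Lagrange.eval_interpolate_at_node _ hinj (mem_range.mpr (by omega))]
  simp only [nodeSign]
  rcases lt_trichotomy j n with h | rfl | h
  · rw [if_pos (by omega), if_pos h.le, if_neg h.ne, pow_succ]; ring
  · rw [if_neg (by omega), if_pos le_rfl, if_pos rfl, pow_succ]; ring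
  · rw [if_neg (by omega), if_neg (by omega), if_neg h.ne', pow_succ]; ring

theorem taylor_one_signInterpolant_add (n : ℕ) :
    taylor 1 (signInterpolant n) + signInterpolant n =
      binomPoly n * (binomPoly n).comp (X - C ((n : ℚ) + 1)) := by
  have hdeg := natDegree_signInterpolant_le n
  refine eq_of_natDegree_le_of_coeff_eq_of_eval_index_eq (range (2 * n)) Nat.cast_injective.injOn
    ?_ ?_ ?_ ?_
  · rw [card_range]
    exact natDegree_add_le_of_degree_le (by rwa [natDegree_taylor]) hdeg
  · rw [card_range]
    exact natDegree_binomPoly_mul_comp_le n _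
  · rw [card_range, coeff_add, coeff_taylor_of_natDegree_le _ hdeg, coeff_signInterpolant,
      coeff_binomPoly_mul_comp]
    ring
  · intro j hj
    rw [eval_add, taylor_eval, eval_signInterpolant_add_one_add (mem_range.mp hj),
      eval_binomPoly_mul_comp (mem_range.mp hj)]

/-- For `n ≥ 1`, the explicit polynomial
`F(x) = ½∑_{j=0}^{n}(−1)^j ∏_{k≠j}(x−k)/(j−k) + ½∑_{j=n+1}^{2n}(−1)^{j+1} ∏_{k≠j}(x−k)/(j−k)`
(products over `0 ≤ k ≤ 2n`) satisfies `F(x+1) + F(x) = [x choose n]·[x−n−1 choose n]`. -/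
theorem stmt14 : ∀ n : ℕ, 1 ≤ n → ∀ F : Polynomial ℚ,
    F = Polynomial.C (1 / 2 : ℚ) *
          (∑ j ∈ Finset.range (n + 1), Polynomial.C ((-1 : ℚ) ^ j) *
            ∏ k ∈ (Finset.range (2 * n + 1)).erase j,
              Polynomial.C (((j : ℚ) - (k : ℚ))⁻¹) * (Polynomial.X - Polynomial.C (k : ℚ))) +
        Polynomial.C (1 / 2 : ℚ) *
          (∑ j ∈ Finset.Icc (n + 1) (2 * n), Polynomial.C ((-1 : ℚ) ^ (j + 1)) *
            ∏ k ∈ (Finset.range (2 * n + 1)).erase j,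
              Polynomial.C (((j : ℚ) - (k : ℚ))⁻¹) * (Polynomial.X - Polynomial.C (k : ℚ))) →
    F.comp (Polynomial.X + 1) + F =
      binomPoly n * (binomPoly n).comp (Polynomial.X - Polynomial.C ((n : ℚ) + 1)) := by
  intro n _ F hF
  rw [hF, lagrange_half_sums_eq_signInterpolant, ← C_1, ← taylor_apply,
    taylor_one_signInterpolant_add]
end

section
/- For all integers n ≥ 1 and 0 ≤ μ ≤ n one has 2·C(n,0) = ∑_{k=0}^{2n} C(2n,k)·(−1)^k·[k choose n]·[k−μ choose n], where [y choose n] = y(y−1)···(y−n+1)/n! is the generalized binomial coefficient evaluated at the integer y (and C denotes the super Catalan number on the left, the ordinary binomial coefficient elsewhere). -/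
/-!
The `m`-th forward difference of a polynomial of degree `m` is `m!` times its leading coefficient,
and by Newton's formula it is, up to the sign `(-1)^m`, the alternating sum
`∑ k, C(m,k) (-1)^k P(k)`. Here `n!² [k choose n] [k - μ choose n]` is the value at `k` of the
monic polynomial `X(X-1)⋯(X-n+1) · (X-μ)(X-μ-1)⋯(X-μ-n+1)` of degree `2n`, so the sum equals
`(2n)!/n!² = 2·C(n,0)`.
-/

/-- The super Catalan number `C(m,k) = (2m)!·(2k)!/(2·m!·k!·(m+k)!)`. -/
def superCatalan (m k : ℕ) : ℚ :=
  (((2 * m).factorial : ℚ) * ((2 * k).factorial : ℚ)) /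
    (2 * (m.factorial : ℚ) * (k.factorial : ℚ) * ((m + k).factorial : ℚ))

/-- The generalized binomial coefficient `[y choose n] = y(y−1)⋯(y−n+1)/n!` for rational `y`. -/
def genBinom (y : ℚ) (n : ℕ) : ℚ :=
  (∏ i ∈ Finset.range n, (y - (i : ℚ))) / (n.factorial : ℚ)

open Polynomial Finset

theorem Polynomial.sum_range_choose_mul_neg_one_pow_mul_eval {R : Type*} [CommRing R] (P : R[X]) :
    ∑ k ∈ range (P.natDegree + 1), (P.natDegree.choose k : R) * (-1) ^ k * P.eval (k : R) =
      (-1) ^ P.natDegree * P.natDegree.factorial * P.leadingCoeff := by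
  set m := P.natDegree
  have h := congr_fun P.fwdDiff_iter_degree_eq_factorial 0
  rw [fwdDiff_iter_eq_sum_shift] at h
  simp only [zero_add, nsmul_eq_mul, mul_one, Pi.smul_apply, Pi.natCast_apply, smul_eq_mul] at h
  calc _ = (-1) ^ m * ∑ k ∈ range (m + 1), ((-1 : ℤ) ^ (m - k) * m.choose k) • P.eval (k : R) := by
        rw [mul_sum]
        refine sum_congr rfl fun k hk => ?_
        have sign : (-1 : R) ^ m * (-1) ^ (m - k) = (-1) ^ k := by
          rw [← pow_add, show m + (m - k) = k + 2 * (m - k) by grind, pow_add, pow_mul,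
            neg_one_sq, one_pow, mul_one]
        rw [zsmul_eq_mul, ← sign]
        push_cast
        ring
    _ = _ := by rw [h]; ring

theorem Polynomial.Monic.sum_range_choose_mul_neg_one_pow_mul_eval {R : Type*} [CommRing R]
    {P : R[X]} (hP : P.Monic) :
    ∑ k ∈ range (P.natDegree + 1), (P.natDegree.choose k : R) * (-1) ^ k * P.eval (k : R) =
      (-1) ^ P.natDegree * P.natDegree.factorial := by
  rw [P.sum_range_choose_mul_neg_one_pow_mul_eval, hP.leadingCoeff, mul_one]

theorem genBinom_eq_descPochhammer_eval (y : ℚ) (n : ℕ) :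
    genBinom y n = (descPochhammer ℚ n).eval y / n.factorial := by
  rw [genBinom, descPochhammer_eval_eq_prod_range]

theorem natDegree_descPochhammer_mul_comp_X_sub_C {R : Type*} [CommRing R] [Nontrivial R]
    [NoZeroDivisors R] (n : ℕ) (r : R) :
    (descPochhammer R n * (descPochhammer R n).comp (X - C r)).natDegree = 2 * n := by
  rw [(monic_descPochhammer R n).natDegree_mul ((monic_descPochhammer R n).comp_X_sub_C r),
    natDegree_comp, natDegree_X_sub_C, descPochhammer_natDegree]
  ring

theorem two_mul_superCatalan_zero_right (n : ℕ) :
    2 * superCatalan n 0 = (2 * n).factorial / (n.factorial * n.factorial) := by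
  rw [superCatalan]
  field_simp
  simp

/-- For all `n ≥ 1` and `0 ≤ μ ≤ n`:
`2·C(n,0) = ∑_{k=0}^{2n} C(2n,k)·(−1)^k·[k choose n]·[k−μ choose n]`. -/
theorem stmt15 : ∀ n μ : ℕ, 1 ≤ n → μ ≤ n →
    2 * superCatalan n 0 =
      ∑ k ∈ Finset.range (2 * n + 1),
        ((2 * n).choose k : ℚ) * (-1 : ℚ) ^ k *
          genBinom (k : ℚ) n * genBinom ((k : ℚ) - (μ : ℚ)) n := by
  intro n μ _ _
  set P := descPochhammer ℚ n * (descPochhammer ℚ n).comp (X - C (μ : ℚ))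
  have hP : P.Monic := (monic_descPochhammer ℚ n).mul ((monic_descPochhammer ℚ n).comp_X_sub_C _)
  have hsum := hP.sum_range_choose_mul_neg_one_pow_mul_eval
  rw [natDegree_descPochhammer_mul_comp_X_sub_C, pow_mul, neg_one_sq, one_pow, one_mul] at hsum
  simp only [P, eval_mul, eval_comp, eval_sub, eval_X, eval_C] at hsum
  rw [two_mul_superCatalan_zero_right, ← hsum, sum_div]
  refine sum_congr rfl fun k _ => ?_
  rw [genBinom_eq_descPochhammer_eval, genBinom_eq_descPochhammer_eval]
  ring
end

section
/- For every integer n ≥ 1: (1) for all integers 0 ≤ μ ≤ ⌊(n−1)/2⌋ one has C(n,0) = ∑_{k=0}^{2n} (−1)^{k+1}·[k choose n]·[k+1+2μ−n choose n]·∑_{j=k+1}^{2n} C(2n,j); and (2) for all integers 0 ≤ μ ≤ ⌊n/2⌋ one has (−1)^μ·C(n−μ,μ) − C(n,0) = ∑_{k=0}^{2n} (−1)^{k}·[k choose n]·[k+2μ−n choose n]·∑_{j=k+1}^{2n} C(2n,j). Here C(m,k) on the left-hand sides denotes the super Catalan number and C(2n,j) the ordinary binomial coefficient. -/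
open Finset

lemma genBinom_natCast (k n : ℕ) : genBinom k n = k.choose n := by
  rw [genBinom, ← descPochhammer_eval_eq_prod_range, Nat.cast_choose_eq_descPochhammer_div]

lemma genBinom_mul_genBinom_natCast_add_sub (k n c : ℕ) :
    genBinom k n * genBinom ((k : ℚ) + c - n) n = k.choose n * (k - n + c).choose n := by
  rcases lt_or_ge k n with hkn | hnk
  · simp [genBinom_natCast, Nat.choose_eq_zero_of_lt hkn]
  · have hcast : (k : ℚ) + c - n = (k - n + c : ℕ) := by push_cast [Nat.cast_sub hnk]; ring
    rw [hcast, genBinom_natCast, genBinom_natCast]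

lemma superCatalan_zero_right (m : ℕ) : superCatalan m 0 = (2 * m).choose m / 2 := by
  rw [superCatalan, Nat.cast_choose ℚ (by omega : m ≤ 2 * m), show 2 * m - m = m by omega]
  simp only [Nat.mul_zero, Nat.factorial_zero, Nat.cast_one, Nat.add_zero]
  field_simp

lemma superCatalan_succ_right (m k : ℕ) :
    (2 * m + 1 : ℚ) * superCatalan m (k + 1) = (2 * k + 1) * superCatalan (m + 1) k := by
  simp only [superCatalan, show 2 * (k + 1) = 2 * k + 1 + 1 by ring,
    show 2 * (m + 1) = 2 * m + 1 + 1 by ring, show m + (k + 1) = m + 1 + k by ring,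
    Nat.factorial_succ]
  push_cast
  field_simp
  ring

lemma cast_choose_succ_right_mul (m k : ℕ) :
    (m.choose (k + 1) : ℚ) * (k + 1) = m.choose k * (m - k) := by
  rcases le_or_gt k m with h | h
  · exact_mod_cast Nat.choose_succ_right_eq m k
  · simp [Nat.choose_eq_zero_of_lt h, Nat.choose_eq_zero_of_lt (h.trans (Nat.lt_succ_self k))]

lemma cast_choose_mul_succ (m k : ℕ) :
    (m.choose k : ℚ) * (m + 1) = (m + 1).choose k * (m + 1 - k) := by
  rcases le_or_gt k (m + 1) with h | h
  · exact_mod_cast Nat.choose_mul_succ_eq m k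
  · simp [Nat.choose_eq_zero_of_lt h, Nat.choose_eq_zero_of_lt (Nat.lt_of_succ_lt h)]

lemma choose_mul_choose_sub (k n q : ℕ) :
    k.choose n * (k - n).choose q = k.choose (n + q) * (n + q).choose n := by
  rw [Nat.choose_mul (Nat.le_add_right n q), Nat.add_sub_cancel_left]

lemma choose_mul_choose_sub_add (k n c p : ℕ) :
    k.choose n * (k - n + c).choose p =
      ∑ i ∈ range (p + 1), c.choose i * (n + p - i).choose n * k.choose (n + p - i) := by
  rw [add_comm (k - n), Nat.add_choose_eq, Nat.sum_antidiagonal_eq_sum_range_succ_mk, mul_sum]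
  refine sum_congr rfl fun i hi => ?_
  rw [mul_left_comm, choose_mul_choose_sub, show n + (p - i) = n + p - i by grind]
  ring

def binomTail (m k : ℕ) : ℚ := ∑ j ∈ Icc (k + 1) m, (m.choose j : ℚ)

lemma binomTail_of_le {m k : ℕ} (h : m ≤ k) : binomTail m k = 0 := by
  rw [binomTail, Icc_eq_empty (by omega), sum_empty]

lemma binomTail_eq_add (m k : ℕ) : binomTail m k = binomTail m (k + 1) + m.choose (k + 1) := by
  rcases le_or_gt (k + 1) m with h | h
  · rw [binomTail, ← insert_Icc_add_one_left_eq_Icc h, sum_insert (by simp), binomTail, add_comm]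
  · rw [binomTail_of_le (by omega), binomTail_of_le (by omega), Nat.choose_eq_zero_of_lt h]
    simp

lemma sum_neg_one_pow_mul_choose_mul_choose (m N : ℕ) :
    ∑ k ∈ range (m + 1), (-1 : ℚ) ^ k * k.choose N * m.choose k =
      if N = m then (-1) ^ m else 0 := by
  rcases lt_or_ge m N with h | h
  · rw [if_neg h.ne']
    refine sum_eq_zero fun k hk => ?_
    rw [Nat.choose_eq_zero_of_lt (by grind)]
    simp
  obtain ⟨d, rfl⟩ := Nat.exists_eq_add_of_le h
  have hterm (i : ℕ) : (-1 : ℚ) ^ (N + i) * (N + i).choose N * (N + d).choose (N + i) =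
      (-1) ^ N * (N + d).choose N * ((-1) ^ i * d.choose i) := by
    have h := Nat.choose_mul (n := N + d) (Nat.le_add_right N i)
    rw [Nat.add_sub_cancel_left, Nat.add_sub_cancel_left] at h
    have h' : ((N + d).choose (N + i) * (N + i).choose N : ℚ) = (N + d).choose N * d.choose i := by
      exact_mod_cast h
    linear_combination (-1 : ℚ) ^ N * (-1) ^ i * h'
  have halt : ∑ i ∈ range (d + 1), (-1 : ℚ) ^ i * d.choose i = if d = 0 then 1 else 0 := by
    exact_mod_cast Int.alternating_sum_range_choose
  rw [show N + d + 1 = N + (d + 1) by ring, sum_range_add,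
    sum_eq_zero fun k hk => by simp [Nat.choose_eq_zero_of_lt (mem_range.1 hk)], zero_add]
  simp only [hterm, ← mul_sum, halt]
  rcases Nat.eq_zero_or_pos d with rfl | hd
  · simp
  · simp [hd.ne']

def alternatingTailSum (m N : ℕ) : ℚ :=
  ∑ k ∈ range (m + 1), (-1) ^ k * k.choose N * binomTail m k

lemma alternatingTailSum_self (m : ℕ) : alternatingTailSum m m = 0 := by
  refine sum_eq_zero fun k _ => ?_
  rcases lt_or_ge k m with h | h
  · simp [Nat.choose_eq_zero_of_lt h]
  · simp [binomTail_of_le h]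

lemma alternatingTailSum_eq (m N : ℕ) :
    alternatingTailSum m N =
      -2 * alternatingTailSum m (N + 1) - if N + 1 = m then (-1) ^ m else 0 := by
  rw [← sum_neg_one_pow_mul_choose_mul_choose]
  have hpascal : alternatingTailSum m N =
      ∑ k ∈ range (m + 1), (-1 : ℚ) ^ k * (k + 1).choose (N + 1) * binomTail m k -
        alternatingTailSum m (N + 1) := by
    rw [alternatingTailSum, alternatingTailSum, ← sum_sub_distrib]
    refine sum_congr rfl fun k _ => ?_
    rw [Nat.choose_succ_succ']
    push_cast
    ring
  have hshift : ∑ k ∈ range (m + 1), (-1 : ℚ) ^ k * (k + 1).choose (N + 1) * binomTail m k =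
      -(alternatingTailSum m (N + 1) +
        ∑ k ∈ range (m + 1), (-1 : ℚ) ^ k * k.choose (N + 1) * m.choose k) := by
    rw [alternatingTailSum, ← sum_add_distrib, sum_range_succ, binomTail_of_le le_rfl,
      sum_range_succ']
    simp only [Nat.choose_zero_succ, Nat.cast_zero, mul_zero, zero_mul, add_zero,
      ← sum_neg_distrib]
    refine sum_congr rfl fun k _ => ?_
    rw [binomTail_eq_add m k]
    ring
  rw [hpascal, hshift]
  ring

lemma alternatingTailSum_sub_succ {m r : ℕ} (hr : r < m) :
    alternatingTailSum m (m - (r + 1)) = (-1) ^ (m + 1) * (-2) ^ r := by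
  induction r with
  | zero =>
    rw [alternatingTailSum_eq, Nat.sub_add_cancel hr, alternatingTailSum_self, if_pos rfl]
    ring
  | succ r ih =>
    rw [alternatingTailSum_eq, show m - (r + 1 + 1) + 1 = m - (r + 1) by omega, ih (by omega),
      if_neg (by omega)]
    ring

def middleCoeff (n c : ℕ) : ℚ := ∑ r ∈ range (n + 1), (-2) ^ r * c.choose r * (2 * n - r).choose n

lemma sum_neg_one_pow_mul_choose_mul_binomTail (n c : ℕ) :
    ∑ k ∈ range (2 * n + 1),
        (-1 : ℚ) ^ k * (k.choose n * (k - n + c).choose n : ℕ) * binomTail (2 * n) k =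
      (middleCoeff n c - (2 * n).choose n) / 2 := by
  calc _ = ∑ r ∈ range (n + 1),
        (c.choose r * (2 * n - r).choose n : ℚ) * alternatingTailSum (2 * n) (2 * n - r) := by
        simp only [choose_mul_choose_sub_add, ← two_mul, Nat.cast_sum, Nat.cast_mul,
          alternatingTailSum, mul_sum, sum_mul]
        rw [sum_comm]
        exact sum_congr rfl fun r _ => sum_congr rfl fun k _ => by ring
    _ = (middleCoeff n c - (2 * n).choose n) / 2 := by
        rw [middleCoeff, sum_range_succ', sum_range_succ', Nat.sub_zero, alternatingTailSum_self]
        simp only [pow_zero, Nat.choose_zero_right, Nat.cast_one, mul_one, one_mul,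
          mul_zero, add_zero, add_sub_cancel_right, sum_div]
        refine sum_congr rfl fun r hr => ?_
        rw [alternatingTailSum_sub_succ (by grind), pow_succ (-1 : ℚ), pow_mul, pow_succ]
        ring

def middleCoeffCertificate (n c : ℕ) : ℕ → ℚ
  | 0 => 0
  | r + 1 => 2 * (-2) ^ r * (n - r) * (c + 1).choose r * (2 * n - r).choose n

lemma middleCoeff_term_eq_sub_certificate {n r : ℕ} (c : ℕ) (hr : r ≤ n) :
    (2 * n - c - 1 : ℚ) * ((-2) ^ r * (c + 2).choose r * (2 * n - r).choose n) +
        (c + 1) * ((-2) ^ r * c.choose r * (2 * n - r).choose n) =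
      middleCoeffCertificate n c (r + 1) - middleCoeffCertificate n c r := by
  cases r with
  | zero =>
    simp only [middleCoeffCertificate, Nat.choose_zero_right, Nat.sub_zero]
    push_cast
    ring
  | succ s =>
    simp only [middleCoeffCertificate]
    have hpascal : ((c + 2).choose (s + 1) : ℚ) = (c + 1).choose s + (c + 1).choose (s + 1) := by
      exact_mod_cast Nat.choose_succ_succ' (c + 1) s
    have hc := cast_choose_mul_succ c (s + 1)
    have hc' := cast_choose_succ_right_mul (c + 1) s
    have hcentral := cast_choose_mul_succ (2 * n - (s + 1)) n
    rw [show 2 * n - (s + 1) + 1 = 2 * n - s by omega,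
      Nat.cast_sub (by omega : s + 1 ≤ 2 * n)] at hcentral
    push_cast at hc hc' hcentral ⊢
    linear_combination (-2 : ℚ) ^ (s + 1) * ((2 * n - (s + 1)).choose n : ℚ) *
      ((2 * n - c - 1) * hpascal + hc + hc') - 2 * (-2) ^ s * (c + 1).choose s * hcentral

lemma middleCoeff_recurrence (n c : ℕ) :
    (2 * n - c - 1 : ℚ) * middleCoeff n (c + 2) + (c + 1) * middleCoeff n c = 0 := by
  have htop : middleCoeffCertificate n c (n + 1) = 0 := by simp [middleCoeffCertificate]
  rw [middleCoeff, middleCoeff, mul_sum, mul_sum, ← sum_add_distrib,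
    sum_congr rfl fun r hr => middleCoeff_term_eq_sub_certificate c (by grind),
    sum_range_sub, htop]
  simp [middleCoeffCertificate]

lemma middleCoeff_zero (n : ℕ) : middleCoeff n 0 = (2 * n).choose n := by
  rw [middleCoeff, sum_range_succ']
  simp

lemma middleCoeff_one {n : ℕ} (hn : 1 ≤ n) : middleCoeff n 1 = 0 := by
  obtain ⟨m, rfl⟩ := Nat.exists_eq_add_of_le' hn
  have hcentral := cast_choose_mul_succ (2 * m + 1) (m + 1)
  rw [show 2 * m + 1 + 1 = 2 * (m + 1) by ring] at hcentral
  rw [middleCoeff, sum_range_succ', sum_range_succ', sum_eq_zero fun k _ => by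
    rw [Nat.choose_eq_zero_of_lt (by omega : 1 < k + 1 + 1), Nat.cast_zero, mul_zero, zero_mul]]
  simp only [zero_add, Nat.choose_self, Nat.choose_zero_right, Nat.sub_zero,
    show 2 * (m + 1) - 1 = 2 * m + 1 by omega]
  have hm : (m + 1 : ℚ) ≠ 0 := by positivity
  apply mul_left_cancel₀ hm
  push_cast at hcentral
  linear_combination -hcentral

lemma middleCoeff_odd {n μ : ℕ} (h : 2 * μ + 1 ≤ n) : middleCoeff n (2 * μ + 1) = 0 := by
  induction μ with
  | zero => exact middleCoeff_one h
  | succ μ ih =>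
    have hrec := middleCoeff_recurrence n (2 * μ + 1)
    rw [ih (by omega), mul_zero, add_zero] at hrec
    have hne : (2 * n - (2 * μ + 1 : ℕ) - 1 : ℚ) ≠ 0 := by
      push_cast
      have : (2 * μ + 3 : ℚ) ≤ n := by exact_mod_cast (by omega : 2 * μ + 3 ≤ n)
      linarith
    exact (mul_eq_zero.1 hrec).resolve_left hne

lemma middleCoeff_even {n μ : ℕ} (h : 2 * μ ≤ n) :
    middleCoeff n (2 * μ) = (-1) ^ μ * 2 * superCatalan (n - μ) μ := by
  induction μ with
  | zero =>
    rw [middleCoeff_zero, superCatalan_zero_right]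
    simp only [pow_zero, one_mul, Nat.sub_zero]
    ring
  | succ μ ih =>
    have hrec := middleCoeff_recurrence n (2 * μ)
    rw [ih (by omega)] at hrec
    have hsc := superCatalan_succ_right (n - (μ + 1)) μ
    rw [show n - (μ + 1) + 1 = n - μ by omega, Nat.cast_sub (by omega)] at hsc
    have hne : (2 * n - 2 * μ - 1 : ℚ) ≠ 0 := by
      have : (2 * μ + 2 : ℚ) ≤ n := by exact_mod_cast (by omega : 2 * μ + 2 ≤ n)
      linarith
    apply mul_left_cancel₀ hne
    push_cast at hrec hsc ⊢
    linear_combination hrec + 2 * (-1 : ℚ) ^ μ * hsc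

lemma sum_neg_one_pow_mul_genBinom_mul_tail (n c : ℕ) :
    ∑ k ∈ range (2 * n + 1), (-1 : ℚ) ^ k * genBinom k n * genBinom ((k : ℚ) + c - n) n *
        ∑ j ∈ Icc (k + 1) (2 * n), ((2 * n).choose j : ℚ) =
      (middleCoeff n c - (2 * n).choose n) / 2 := by
  rw [← sum_neg_one_pow_mul_choose_mul_binomTail]
  refine sum_congr rfl fun k _ => ?_
  rw [binomTail, Nat.cast_mul, ← genBinom_mul_genBinom_natCast_add_sub]
  ring

/-- For every `n ≥ 1`:
(1) for `0 ≤ μ ≤ ⌊(n−1)/2⌋`: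
`C(n,0) = ∑_{k=0}^{2n} (−1)^{k+1}·[k choose n]·[k+1+2μ−n choose n]·∑_{j=k+1}^{2n} C(2n,j)`;
(2) for `0 ≤ μ ≤ ⌊n/2⌋`:
`(−1)^μ·C(n−μ,μ) − C(n,0) = ∑_{k=0}^{2n} (−1)^k·[k choose n]·[k+2μ−n choose n]·∑_{j=k+1}^{2n} C(2n,j)`. -/
theorem stmt16 : ∀ n : ℕ, 1 ≤ n →
    (∀ μ : ℕ, μ ≤ (n - 1) / 2 →
      superCatalan n 0 =
        ∑ k ∈ Finset.range (2 * n + 1),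
          (-1 : ℚ) ^ (k + 1) * genBinom (k : ℚ) n *
            genBinom ((k : ℚ) + 1 + 2 * (μ : ℚ) - (n : ℚ)) n *
            ∑ j ∈ Finset.Icc (k + 1) (2 * n), ((2 * n).choose j : ℚ)) ∧
    (∀ μ : ℕ, μ ≤ n / 2 →
      (-1 : ℚ) ^ μ * superCatalan (n - μ) μ - superCatalan n 0 =
        ∑ k ∈ Finset.range (2 * n + 1),
          (-1 : ℚ) ^ k * genBinom (k : ℚ) n *
            genBinom ((k : ℚ) + 2 * (μ : ℚ) - (n : ℚ)) n *
            ∑ j ∈ Finset.Icc (k + 1) (2 * n), ((2 * n).choose j : ℚ)) := by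
  intro n hn
  refine ⟨fun μ hμ => ?_, fun μ hμ => ?_⟩
  · have harg (k : ℕ) : (k : ℚ) + 1 + 2 * μ - n = k + (2 * μ + 1 : ℕ) - n := by push_cast; ring
    simp only [harg, pow_succ, mul_neg_one, neg_mul, sum_neg_distrib]
    rw [sum_neg_one_pow_mul_genBinom_mul_tail, middleCoeff_odd (by omega), superCatalan_zero_right]
    ring
  · have harg (k : ℕ) : (k : ℚ) + 2 * μ - n = k + (2 * μ : ℕ) - n := by push_cast; ring
    simp only [harg]
    rw [sum_neg_one_pow_mul_genBinom_mul_tail, middleCoeff_even (by omega), superCatalan_zero_right]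
    ring
end

section
/- Define, for m ≥ 1, a₁(m,x) = ∑_{ν=0}^m [x−1+ν choose ν]·[x choose m−ν]. Then for every integer n ≥ 0, a₁(2n, 1/2) = a₁(2n+1, 1/2) = [n−1/2 choose n] = C(2n,n)/4^n, where C(2n,n) is the central binomial coefficient. -/
open PowerSeries

lemma genBinom_zero (y : ℚ) : genBinom y 0 = 1 := by
  simp [genBinom]

lemma genBinom_succ (y : ℚ) (n : ℕ) : genBinom y (n + 1) = genBinom y n * (y - n) / (n + 1) := by
  simp only [genBinom, Finset.prod_range_succ, Nat.factorial_succ]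
  push_cast
  field_simp

lemma genBinom_add_one_succ (y : ℚ) (n : ℕ) :
    genBinom (y + 1) (n + 1) = genBinom y n * (y + 1) / (n + 1) := by
  simp only [genBinom, Finset.prod_range_succ', Nat.factorial_succ]
  push_cast
  simp only [add_sub_add_right_eq_sub, sub_zero]
  field_simp

lemma eval_binomPoly_s18 (k : ℕ) (x : ℚ) : (binomPoly k).eval x = genBinom x k := by
  simp [binomPoly, genBinom, Polynomial.eval_prod, div_eq_inv_mul]

noncomputable def binomSeries (x : ℚ) : ℚ⟦X⟧ := mk fun k => genBinom x k

noncomputable def negBinomSeries (x : ℚ) : ℚ⟦X⟧ := mk fun k => genBinom (x - 1 + k) k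

lemma eval_a1Poly (m : ℕ) (x : ℚ) :
    (a1Poly m).eval x = coeff m (negBinomSeries x * binomSeries x) := by
  rw [coeff_mul, Finset.Nat.sum_antidiagonal_eq_sum_range_succ_mk, a1Poly,
    Polynomial.eval_finsetSum]
  refine Finset.sum_congr rfl fun ν _ => ?_
  simp only [Polynomial.eval_mul, Polynomial.eval_comp, Polynomial.eval_add, Polynomial.eval_X,
    Polynomial.eval_C, eval_binomPoly_s18, negBinomSeries, binomSeries, coeff_mk]
  ring_nf

lemma coeff_X_mul_derivative {R : Type*} [CommSemiring R] (f : R⟦X⟧) (n : ℕ) :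
    coeff n (X * d⁄dX R f) = coeff n f * n := by
  cases n with
  | zero => simp
  | succ n => rw [coeff_succ_X_mul, coeff_derivative, Nat.cast_succ]

lemma coeff_succ_binomSeries (x : ℚ) (n : ℕ) :
    coeff (n + 1) (binomSeries x) * (n + 1) = (x - n) * coeff n (binomSeries x) := by
  simp only [binomSeries, coeff_mk, genBinom_succ]
  field_simp

lemma coeff_succ_negBinomSeries (x : ℚ) (n : ℕ) :
    coeff (n + 1) (negBinomSeries x) * (n + 1) = (x + n) * coeff n (negBinomSeries x) := by
  simp only [negBinomSeries, coeff_mk, Nat.cast_succ]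
  rw [show x - 1 + (n + 1) = x - 1 + n + 1 by ring, genBinom_add_one_succ]
  field_simp
  ring

lemma one_add_X_mul_derivative_binomSeries (x : ℚ) :
    (1 + X) * d⁄dX ℚ (binomSeries x) = C x * binomSeries x := by
  ext n
  rw [add_mul, one_mul, map_add, coeff_X_mul_derivative, coeff_derivative,
    coeff_succ_binomSeries, coeff_C_mul]
  ring

lemma one_sub_X_mul_derivative_negBinomSeries (x : ℚ) :
    (1 - X) * d⁄dX ℚ (negBinomSeries x) = C x * negBinomSeries x := by
  ext n
  rw [sub_mul, one_mul, map_sub, coeff_X_mul_derivative, coeff_derivative,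
    coeff_succ_negBinomSeries, coeff_C_mul]
  ring

lemma one_sub_X_sq_mul_derivative_negBinomSeries_mul_binomSeries (x : ℚ) :
    (1 - X ^ 2) * d⁄dX ℚ (negBinomSeries x * binomSeries x) =
      C (2 * x) * (negBinomSeries x * binomSeries x) := by
  rw [Derivation.leibniz, smul_eq_mul, smul_eq_mul, map_mul, map_ofNat]
  linear_combination (1 + X) * binomSeries x * one_sub_X_mul_derivative_negBinomSeries x +
    (1 - X) * negBinomSeries x * one_add_X_mul_derivative_binomSeries x

section
variable {R : Type*} [CommRing R] {f : R⟦X⟧} {c : R}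

lemma coeff_one_of_one_sub_X_sq_mul_derivative (h : (1 - X ^ 2) * d⁄dX R f = C c * f) :
    coeff 1 f = c * coeff 0 f := by
  have := congrArg (coeff 0) h
  rwa [sub_mul, one_mul, map_sub, coeff_derivative, pow_two, mul_assoc, coeff_zero_X_mul,
    sub_zero, coeff_C_mul, zero_add, Nat.cast_zero, zero_add, mul_one] at this

lemma coeff_add_two_of_one_sub_X_sq_mul_derivative (h : (1 - X ^ 2) * d⁄dX R f = C c * f)
    (m : ℕ) : (m + 2) * coeff (m + 2) f = c * coeff (m + 1) f + m * coeff m f := by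
  have := congrArg (coeff (m + 1)) h
  rw [sub_mul, one_mul, map_sub, coeff_derivative, pow_two, mul_assoc, coeff_succ_X_mul,
    coeff_X_mul_derivative, coeff_C_mul] at this
  push_cast at this
  linear_combination this

end

lemma genBinom_succ_sub_half (n : ℕ) :
    genBinom ((n + 1 : ℕ) - 1 / 2) (n + 1) * (2 * n + 2) =
      genBinom (n - 1 / 2) n * (2 * n + 1) := by
  rw [show ((n + 1 : ℕ) : ℚ) - 1 / 2 = n - 1 / 2 + 1 by push_cast; ring, genBinom_add_one_succ]
  field_simp
  ring

lemma genBinom_sub_half_self (n : ℕ) : genBinom (n - 1 / 2) n = (2 * n).choose n / 4 ^ n := by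
  induction n with
  | zero => simp [genBinom_zero]
  | succ n ih =>
    have hcentral : ((n + 1) * (n + 1).centralBinom : ℚ) = 2 * (2 * n + 1) * n.centralBinom := by
      exact_mod_cast Nat.succ_mul_centralBinom_succ n
    rw [← Nat.centralBinom_eq_two_mul_choose] at ih ⊢
    have hb := genBinom_succ_sub_half n
    rw [ih] at hb
    generalize genBinom _ (n + 1) = b at hb ⊢
    rw [eq_div_iff (by positivity)]
    refine mul_right_cancel₀ (show (2 * n + 2 : ℚ) ≠ 0 by positivity) ?_
    field_simp at hb
    linear_combination 4 * hb - 2 * hcentral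

lemma coeff_of_one_sub_X_sq_mul_derivative_eq_self {f : ℚ⟦X⟧} (h : (1 - X ^ 2) * d⁄dX ℚ f = f)
    (n : ℕ) : coeff (2 * n) f = coeff 0 f * genBinom (n - 1 / 2) n ∧
      coeff (2 * n + 1) f = coeff 0 f * genBinom (n - 1 / 2) n := by
  replace h : (1 - X ^ 2) * d⁄dX ℚ f = C 1 * f := by rwa [map_one, one_mul]
  induction n with
  | zero => simpa [genBinom_zero] using coeff_one_of_one_sub_X_sq_mul_derivative h
  | succ n ih =>
    have heven := coeff_add_two_of_one_sub_X_sq_mul_derivative h (2 * n)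
    have hodd := coeff_add_two_of_one_sub_X_sq_mul_derivative h (2 * n + 1)
    have hb := genBinom_succ_sub_half n
    rw [ih.1, ih.2] at heven
    have h2 : coeff (2 * (n + 1)) f = coeff 0 f * genBinom ((n + 1 : ℕ) - 1 / 2) (n + 1) := by
      refine mul_left_cancel₀ (show (2 * n + 2 : ℚ) ≠ 0 by positivity) ?_
      push_cast at heven hb ⊢
      linear_combination heven - coeff 0 f * hb
    refine ⟨h2, ?_⟩
    rw [show 2 * n + 1 + 1 = 2 * (n + 1) by ring, h2, ih.2] at hodd
    refine mul_left_cancel₀ (show (2 * n + 3 : ℚ) ≠ 0 by positivity) ?_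
    push_cast at hodd hb ⊢
    linear_combination hodd - coeff 0 f * hb

/-- For every `n ≥ 0`: `a₁(2n,1/2) = a₁(2n+1,1/2) = [n−1/2 choose n] = C(2n,n)/4^n`. -/
theorem stmt18 : ∀ n : ℕ,
    (a1Poly (2 * n)).eval (1 / 2 : ℚ) = (a1Poly (2 * n + 1)).eval (1 / 2 : ℚ) ∧
    (a1Poly (2 * n)).eval (1 / 2 : ℚ) = genBinom ((n : ℚ) - 1 / 2) n ∧
    genBinom ((n : ℚ) - 1 / 2) n = ((2 * n).choose n : ℚ) / 4 ^ n := by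
  intro n
  have hode := one_sub_X_sq_mul_derivative_negBinomSeries_mul_binomSeries (1 / 2)
  rw [mul_one_div_cancel two_ne_zero, map_one, one_mul] at hode
  obtain ⟨heven, hodd⟩ := coeff_of_one_sub_X_sq_mul_derivative_eq_self hode n
  have hconst : coeff 0 (negBinomSeries (1 / 2) * binomSeries (1 / 2)) = 1 := by
    simp [negBinomSeries, binomSeries, genBinom_zero]
  rw [eval_a1Poly, eval_a1Poly, heven, hodd, hconst, one_mul]
  exact ⟨rfl, rfl, genBinom_sub_half_self n⟩
end
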